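/- arXiv:1107.0957 — 3 statements merged into one kernel-verified Lean document; each statement's English description precedes it below -/
import Mathlib

section
/- Let w be a weight on ℝ^n whose logarithm log w is locally integrable, and suppose that [w]_{A_∞} ≤ 1 + δ for some δ with 0 ≤ δ < 1. Then the function f = log w satisfies (1/|Q|)∫_Q |f − f_Q| dx ≤ 32√δ for every cube Q; in particular ‖f‖_* ≤ 32√δ. -/
open MeasureTheory Real Filter
open scoped ENNReal

noncomputable section

/-- A cube in `ℝⁿ`: a product of closed intervals of common positive side length. -/
def IsCube {n : ℕ} (Q : Set (Fin n → ℝ)) : Prop :=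
  ∃ (a : Fin n → ℝ) (h : ℝ), 0 < h ∧
    Q = Set.univ.pi fun i => Set.Icc (a i) (a i + h)

/-- The average `(1/|Q|) ∫_Q f dx`. -/
def cubeAvg {n : ℕ} (Q : Set (Fin n → ℝ)) (f : (Fin n → ℝ) → ℝ) : ℝ :=
  (volume Q).toReal⁻¹ * ∫ x in Q, f x

/-- The mean oscillation `(1/|Q|) ∫_Q |f - f_Q| dx` over a cube `Q`. -/
def bmoOsc {n : ℕ} (Q : Set (Fin n → ℝ)) (f : (Fin n → ℝ) → ℝ) : ℝ :=
  cubeAvg Q fun x => |f x - cubeAvg Q f|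

/-- `‖f‖_* ≤ C`, expressed cube-wise. -/
def BmoLe {n : ℕ} (f : (Fin n → ℝ) → ℝ) (C : ℝ) : Prop :=
  ∀ Q : Set (Fin n → ℝ), IsCube Q → bmoOsc Q f ≤ C

/-- The BMO norm `‖f‖_*` (as a supremum of mean oscillations over all cubes). -/
def bmoNorm {n : ℕ} (f : (Fin n → ℝ) → ℝ) : ℝ :=
  sSup {r : ℝ | ∃ Q : Set (Fin n → ℝ), IsCube Q ∧ r = bmoOsc Q f}

/-- A weight: a locally integrable function that is positive almost everywhere. -/
def IsWeight {n : ℕ} (w : (Fin n → ℝ) → ℝ) : Prop :=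
  LocallyIntegrable w volume ∧ ∀ᵐ x ∂(volume : Measure (Fin n → ℝ)), 0 < w x

/-- The `A_p` quantity of a weight over one cube:
`((1/|Q|)∫_Q w)((1/|Q|)∫_Q w^{1-p'})^{p-1}` where `p' = p/(p-1)`. -/
def apQ {n : ℕ} (p : ℝ) (Q : Set (Fin n → ℝ)) (w : (Fin n → ℝ) → ℝ) : ℝ :=
  cubeAvg Q w * (cubeAvg Q fun x => w x ^ (1 - p / (p - 1))) ^ (p - 1)

/-- `w` is an `A_p` weight: a weight with `w^{1-p'}` locally integrable and
uniformly bounded `A_p` quantities over all cubes. -/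
def IsApWeight {n : ℕ} (p : ℝ) (w : (Fin n → ℝ) → ℝ) : Prop :=
  IsWeight w ∧ LocallyIntegrable (fun x => w x ^ (1 - p / (p - 1))) volume ∧
    ∃ C : ℝ, ∀ Q : Set (Fin n → ℝ), IsCube Q → apQ p Q w ≤ C

/-- The `A_p` characteristic `[w]_{A_p}` (supremum over all cubes). -/
def apChar {n : ℕ} (p : ℝ) (w : (Fin n → ℝ) → ℝ) : ℝ :=
  sSup {r : ℝ | ∃ Q : Set (Fin n → ℝ), IsCube Q ∧ r = apQ p Q w}

/-- The weighted `p`-th power "norm" `∫ |f|^p w dx`, valued in `ℝ≥0∞`. -/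
def wNorm {n : ℕ} (p : ℝ) (w f : (Fin n → ℝ) → ℝ) : ℝ≥0∞ :=
  ∫⁻ x, ENNReal.ofReal (|f x| ^ p * w x)

/-- `C` is an admissible bound for `T : L^p(w) → L^p(w)`. -/
def IsOpBound {n : ℕ} (p : ℝ) (T : ((Fin n → ℝ) → ℝ) → (Fin n → ℝ) → ℝ)
    (w : (Fin n → ℝ) → ℝ) (C : ℝ) : Prop :=
  0 ≤ C ∧ ∀ f : (Fin n → ℝ) → ℝ, Measurable f → wNorm p w f < ⊤ →
    wNorm p w (T f) ≤ ENNReal.ofReal C ^ p * wNorm p w f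

/-- The operator norm `‖T‖_{L^p(w) → L^p(w)}`: the least admissible bound. -/
def opNorm {n : ℕ} (p : ℝ) (T : ((Fin n → ℝ) → ℝ) → (Fin n → ℝ) → ℝ)
    (w : (Fin n → ℝ) → ℝ) : ℝ :=
  sInf {C : ℝ | IsOpBound p T w C}

/-! With `c` the mean of `f = log w` over a cube `Q`, the pointwise inequality
`ε |t| ≤ ε² + 2 (eᵗ - 1 - t)` (for `ε ≤ 1`), applied to `t = f - c` and averaged over `Q`,
bounds `ε` times the mean oscillation by `ε² + 2 (w_Q / exp c - 1) ≤ ε² + 2 δ`;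
taking `ε = √δ` gives the bound `3 √δ`. -/

open ProbabilityTheory

theorem Real.one_add_half_sq_le_exp {t : ℝ} (ht : -2 ≤ t) : (1 + t / 2) ^ 2 ≤ exp t := by
  calc (1 + t / 2) ^ 2 ≤ exp (t / 2) ^ 2 := by
        gcongr
        · linarith
        · linarith [add_one_le_exp (t / 2)]
    _ = exp t := by rw [← exp_nat_mul]; ring_nf

theorem Real.mul_abs_le_sq_add_two_mul_exp_sub_one_sub {ε : ℝ} (t : ℝ) (hε1 : ε ≤ 1) :
    ε * |t| ≤ ε ^ 2 + 2 * (exp t - 1 - t) := by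
  rcases le_or_gt (-2) t with ht | ht
  · -- `eᵗ - 1 - t ≥ t² / 4`, then AM-GM
    nlinarith [one_add_half_sq_le_exp ht, sq_nonneg (ε - |t| / 2), sq_abs t]
  · rw [abs_of_neg (by linarith)]
    nlinarith [exp_pos t]

theorem le_three_mul_sqrt_of_forall_mul_le {x δ : ℝ} (hδ0 : 0 ≤ δ) (hδ1 : δ ≤ 1)
    (h : ∀ ε, 0 < ε → ε ≤ 1 → ε * x ≤ ε ^ 2 + 2 * δ) : x ≤ 3 * √δ := by
  rcases hδ0.eq_or_lt with rfl | hδ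
  · by_contra! hx
    rw [sqrt_zero, mul_zero] at hx
    have := h (min x 1 / 2) (by positivity) (by linarith [min_le_right x 1])
    nlinarith [min_le_left x 1, min_le_right x 1, lt_min hx one_pos]
  · have hs : 0 < √δ := sqrt_pos.2 hδ
    have := h (√δ) hs (sqrt_le_one.2 hδ1)
    nlinarith [sq_sqrt hδ0]

section Probability

variable {Ω : Type*} [MeasurableSpace Ω] {μ : Measure Ω} [IsProbabilityMeasure μ] {f : Ω → ℝ}

theorem mul_integral_abs_sub_integral_le (hf : Integrable f μ)
    (hexp : Integrable (fun x => exp (f x)) μ) {ε : ℝ} (hε1 : ε ≤ 1) :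
    ε * ∫ x, |f x - ∫ y, f y ∂μ| ∂μ ≤
      ε ^ 2 + 2 * ((∫ x, exp (f x) ∂μ) / exp (∫ x, f x ∂μ) - 1) := by
  set c := ∫ x, f x ∂μ
  have hexpc : Integrable (fun x => exp (f x) / exp c) μ := hexp.div_const _
  have hfc : Integrable (fun x => f x - c) μ := hf.sub (integrable_const c)
  have hexpc1 : Integrable (fun x => exp (f x) / exp c - 1) μ := hexpc.sub (integrable_const 1)
  have hφ : Integrable (fun x => exp (f x) / exp c - 1 - (f x - c)) μ := hexpc1.sub hfc
  calc ε * ∫ x, |f x - c| ∂μ = ∫ x, ε * |f x - c| ∂μ := (integral_const_mul ..).symm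
    _ ≤ ∫ x, (ε ^ 2 + 2 * (exp (f x) / exp c - 1 - (f x - c))) ∂μ := by
        refine integral_mono (hfc.abs.const_mul ε) ((integrable_const _).add (hφ.const_mul 2))
          fun x => ?_
        rw [← exp_sub]
        exact mul_abs_le_sq_add_two_mul_exp_sub_one_sub _ hε1
    _ = ε ^ 2 + 2 * ((∫ x, exp (f x) ∂μ) / exp c - 1) := by
        rw [integral_add (integrable_const _) (hφ.const_mul 2), integral_const_mul,
          integral_sub hexpc1 hfc, integral_sub hexpc (integrable_const 1),
          integral_sub hf (integrable_const c), integral_div]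
        simp [c]

end Probability

theorem MeasureTheory.LocallyIntegrable.integrable_cond {X : Type*} [MeasurableSpace X]
    [TopologicalSpace X] {μ : Measure X} {g : X → ℝ} {K : Set X}
    (hg : LocallyIntegrable g μ) (hK : IsCompact K) (hK0 : μ K ≠ 0) :
    Integrable g μ[|K] :=
  (hg.integrableOn_isCompact hK).smul_measure (ENNReal.inv_ne_top.2 hK0)

theorem cubeAvg_eq_integral_cond {n : ℕ} (Q : Set (Fin n → ℝ)) (g : (Fin n → ℝ) → ℝ) :
    cubeAvg Q g = ∫ x, g x ∂volume[|Q] := by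
  rw [cubeAvg, ← smul_eq_mul, ← measureReal_def, ← setAverage_eq, setAverage_eq']
  rfl

namespace IsCube

variable {n : ℕ} {Q : Set (Fin n → ℝ)}

theorem isCompact (hQ : IsCube Q) : IsCompact Q := by
  obtain ⟨a, h, -, rfl⟩ := hQ
  exact isCompact_univ_pi fun i => isCompact_Icc

theorem volume_ne_zero (hQ : IsCube Q) : volume Q ≠ 0 := by
  obtain ⟨a, h, hh, rfl⟩ := hQ
  rw [volume_pi_pi]
  simp [Real.volume_Icc, hh]

theorem isProbabilityMeasure_cond (hQ : IsCube Q) : IsProbabilityMeasure (volume[|Q]) :=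
  cond_isProbabilityMeasure_of_finite hQ.volume_ne_zero hQ.isCompact.measure_lt_top.ne

end IsCube

/-- If `w` is a weight with locally integrable logarithm and
`[w]_{A_∞} ≤ 1 + δ` (cube-wise) with `0 ≤ δ < 1`, then `f = log w` satisfies
`(1/|Q|)∫_Q |f - f_Q| ≤ 32 √δ` for every cube `Q`; in particular `‖f‖_* ≤ 32 √δ`. -/
theorem bmo_bound_of_small_Ainfty {n : ℕ} (w : (Fin n → ℝ) → ℝ) (hw : IsWeight w)
    (hlog : LocallyIntegrable (fun x => Real.log (w x)) volume)
    (δ : ℝ) (hδ0 : 0 ≤ δ) (hδ1 : δ < 1)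
    (hAinfty : ∀ Q : Set (Fin n → ℝ), IsCube Q →
      cubeAvg Q w ≤ (1 + δ) * Real.exp (cubeAvg Q fun x => Real.log (w x))) :
    BmoLe (fun x => Real.log (w x)) (32 * Real.sqrt δ) := by
  intro Q hQ
  have := hQ.isProbabilityMeasure_cond
  have hexp_log : (fun x => exp (log (w x))) =ᵐ[volume[|Q]] w :=
    cond_absolutelyContinuous.ae_le (hw.2.mono fun x hx => exp_log hx)
  have hratio :
      (∫ x, exp (log (w x)) ∂volume[|Q]) / exp (∫ x, log (w x) ∂volume[|Q]) - 1 ≤ δ := by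
    have := hAinfty Q hQ
    rw [cubeAvg_eq_integral_cond, cubeAvg_eq_integral_cond, ← integral_congr_ae hexp_log] at this
    rw [sub_le_iff_le_add, div_le_iff₀ (exp_pos _)]
    linarith
  have hosc := le_three_mul_sqrt_of_forall_mul_le hδ0 hδ1.le fun ε _ hε1 =>
    (mul_integral_abs_sub_integral_le (hlog.integrable_cond hQ.isCompact hQ.volume_ne_zero)
      ((hw.1.integrable_cond hQ.isCompact hQ.volume_ne_zero).congr hexp_log.symm)
      hε1).trans (by gcongr)
  simp only [bmoOsc, cubeAvg_eq_integral_cond]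
  linarith [sqrt_nonneg δ]
end
end

section
/- For every dimension n ≥ 1, every 1 < p < ∞ and every ε > 0 there exists δ > 0 such that every locally integrable function f : ℝ^n → ℝ with ‖f‖_* ≤ δ satisfies: e^f is an A_p weight and [e^f]_{A_p} ≤ 1 + ε. -/
/-!
Cubes of `ℝⁿ` (with the sup-norm) are its closed balls. If every ball has mean oscillation at
most `τ`, a Calderón–Zygmund stopping-time argument (Lebesgue differentiation, then the Vitali
`5r`-covering) gives the John–Nirenberg decay `|{x ∈ B : |f - f_B| > 2Cτk}| ≤ 2⁻ᵏ |B|`, and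
summing over these layers, `⨍_B e^{f - f_B} ≤ K(2Cτ)` with `K(a) → 1` as `a → 0`. Apply this to
`f` and to `(1 - p') f`: since `(1 - p')(p - 1) = -1`, the factors `e^{f_B}` cancel in the `A_p`
quantity of `e^f`, which is therefore at most `K^p ≤ 1 + ε` once `‖f‖_*` is small.
-/

open MeasureTheory Real Filter
open scoped ENNReal

noncomputable section

open MeasureTheory Metric Set Module
open scoped Topology

section MeasureSpace

variable {α : Type*} [MeasurableSpace α] {μ : Measure α} {s : Set α}

lemma setAverage_le_iff_integral_le {g : α → ℝ} {M : ℝ} (hs : 0 < μ.real s) :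
    ⨍ x in s, g x ∂μ ≤ M ↔ ∫ x in s, g x ∂μ ≤ M * μ.real s := by
  rw [setAverage_eq, smul_eq_mul, inv_mul_le_iff₀ hs, mul_comm]

lemma lt_setAverage_iff_lt_integral {g : α → ℝ} {M : ℝ} (hs : 0 < μ.real s) :
    M < ⨍ x in s, g x ∂μ ↔ M * μ.real s < ∫ x in s, g x ∂μ := by
  rw [setAverage_eq, smul_eq_mul, lt_inv_mul_iff₀ hs, mul_comm]

lemma measureReal_mul_abs_setAverage_sub_le {f : α → ℝ} (hs : μ s ≠ ⊤)
    (hf : IntegrableOn f s μ) (c : ℝ) :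
    μ.real s * |⨍ x in s, f x ∂μ - c| ≤ ∫ x in s, |f x - c| ∂μ := by
  have h : μ.real s * (⨍ x in s, f x ∂μ - c) = ∫ x in s, (f x - c) ∂μ := by
    rw [integral_sub hf (integrableOn_const hs), setIntegral_const, smul_eq_mul, mul_sub,
      ← smul_eq_mul, measure_smul_setAverage f hs]
  rw [← abs_of_nonneg (measureReal_nonneg (μ := μ) (s := s)), ← abs_mul, h]
  exact abs_integral_le_integral_abs

lemma abs_setAverage_sub_le_of_integral_le {f : α → ℝ} (hs : μ s ≠ ⊤) (hs₀ : 0 < μ.real s)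
    (hf : IntegrableOn f s μ) {c M : ℝ} (h : ∫ x in s, |f x - c| ∂μ ≤ M * μ.real s) :
    |⨍ x in s, f x ∂μ - c| ≤ M := by
  have := (measureReal_mul_abs_setAverage_sub_le hs hf c).trans h
  rw [mul_comm M] at this
  exact le_of_mul_le_mul_left this hs₀

lemma setAverage_const_mul (c : ℝ) (g : α → ℝ) :
    ⨍ x in s, c * g x ∂μ = c * ⨍ x in s, g x ∂μ := by
  simp only [setAverage_eq, smul_eq_mul, integral_const_mul]; ring

lemma mul_tsum_measure_le_setLIntegral {ι : Type*} [Countable ι] {t : ι → Set α}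
    (ht : ∀ i, MeasurableSet (t i)) (hd : Pairwise (Function.onFun Disjoint t)) (hts : ∀ i, t i ⊆ s)
    {g : α → ℝ≥0∞} {c : ℝ≥0∞} (h : ∀ i, c * μ (t i) ≤ ∫⁻ x in t i, g x ∂μ) :
    c * ∑' i, μ (t i) ≤ ∫⁻ x in s, g x ∂μ :=
  calc c * ∑' i, μ (t i) = ∑' i, c * μ (t i) := ENNReal.tsum_mul_left.symm
    _ ≤ ∑' i, ∫⁻ x in t i, g x ∂μ := ENNReal.tsum_le_tsum h
    _ = ∫⁻ x in ⋃ i, t i, g x ∂μ := (lintegral_iUnion ht hd g).symm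
    _ ≤ ∫⁻ x in s, g x ∂μ := lintegral_mono_set (iUnion_subset hts)

/-- `1 + (e^a - 1) ∑ₖ (e^a / 2)^k`: the layer-cake bound for `⨍ e^{|g|}` when `|g| > a k` on at
most a `2⁻ᵏ` fraction of the set. -/
def expBound (a : ℝ) : ℝ := 1 + (exp a - 1) / (1 - exp a / 2)

lemma one_le_expBound {a : ℝ} (ha : 0 ≤ a) (h2 : exp a < 2) : 1 ≤ expBound a :=
  le_add_of_nonneg_right (div_nonneg (by linarith [one_le_exp ha]) (by linarith))

lemma ofReal_exp_le_one_add_tsum {a : ℝ} (ha : 0 < a) (u : ℝ) :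
    ENNReal.ofReal (exp u) ≤
      1 + ∑' k : ℕ, if a * k < u then ENNReal.ofReal (exp (a * (k + 1)) - exp (a * k)) else 0 := by
  set m := ⌈u / a⌉₊
  have hum : u ≤ a * m := by
    rw [← div_le_iff₀' ha]; exact Nat.le_ceil _
  have hkm : ∀ k ∈ Finset.range m, a * k < u := fun k hk => by
    rw [← lt_div_iff₀' ha]; exact Nat.lt_ceil.1 (Finset.mem_range.1 hk)
  have hinc : ∀ k : ℕ, 0 ≤ exp (a * (k + 1)) - exp (a * k) := fun k =>
    sub_nonneg.2 (exp_le_exp.2 (by nlinarith))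
  have htel : ∑ k ∈ Finset.range m, (exp (a * (k + 1)) - exp (a * k)) = exp (a * m) - 1 := by
    simpa using Finset.sum_range_sub (fun k : ℕ => exp (a * k)) m
  calc ENNReal.ofReal (exp u) ≤ ENNReal.ofReal (1 + (exp (a * m) - 1)) :=
        ENNReal.ofReal_le_ofReal (by linarith [exp_le_exp.2 hum])
    _ = 1 + ∑ k ∈ Finset.range m, ENNReal.ofReal (exp (a * (k + 1)) - exp (a * k)) := by
        rw [ENNReal.ofReal_add zero_le_one (by linarith [one_le_exp (by positivity : 0 ≤ a * m)]),
          ENNReal.ofReal_one, ← htel, ENNReal.ofReal_sum_of_nonneg fun k _ => hinc k]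
    _ = 1 + ∑ k ∈ Finset.range m,
          if a * k < u then ENNReal.ofReal (exp (a * (k + 1)) - exp (a * k)) else 0 := by
        congr 1; exact Finset.sum_congr rfl fun k hk => (if_pos (hkm k hk)).symm
    _ ≤ _ := by gcongr; exact ENNReal.sum_le_tsum _

lemma hasSum_exp_sub_mul_inv_two_pow {a : ℝ} (h2 : exp a < 2) :
    HasSum (fun k : ℕ => (exp (a * (k + 1)) - exp (a * k)) * 2⁻¹ ^ k)
      ((exp a - 1) / (1 - exp a / 2)) := by
  have hterm : ∀ k : ℕ, (exp (a * (k + 1)) - exp (a * k)) * 2⁻¹ ^ k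
      = (exp a - 1) * (exp a / 2) ^ k := fun k => by
    rw [mul_add, mul_one, exp_add, mul_comm a, exp_nat_mul, div_eq_mul_inv, mul_pow]; ring
  simp_rw [hterm, div_eq_mul_inv (exp a - 1)]
  exact (hasSum_geometric_of_lt_one (by positivity) (by linarith)).mul_left _

lemma setLIntegral_exp_abs_le {g : α → ℝ} {a : ℝ} (hg : AEMeasurable g (μ.restrict s))
    (ha : 0 < a) (h2 : exp a < 2) (hlevel : ∀ k : ℕ, μ {x ∈ s | a * k < |g x|} ≤ 2⁻¹ ^ k * μ s) :
    ∫⁻ x in s, ENNReal.ofReal (exp |g x|) ∂μ ≤ ENNReal.ofReal (expBound a) * μ s := by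
  set c : ℕ → ℝ := fun k => exp (a * (k + 1)) - exp (a * k)
  have hc : ∀ k, 0 ≤ c k := fun k => sub_nonneg.2 (exp_le_exp.2 (by nlinarith))
  have hlev : ∀ k : ℕ, NullMeasurableSet {x | a * k < |g x|} (μ.restrict s) := fun k =>
    nullMeasurableSet_lt aemeasurable_const hg.abs
  have hsum := hasSum_exp_sub_mul_inv_two_pow h2
  calc ∫⁻ x in s, ENNReal.ofReal (exp |g x|) ∂μ
      ≤ ∫⁻ x in s, 1 + ∑' k : ℕ,
          {x | a * k < |g x|}.indicator (fun _ => ENNReal.ofReal (c k)) x ∂μ :=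
        lintegral_mono fun x => by
          simpa [Set.indicator_apply] using ofReal_exp_le_one_add_tsum ha |g x|
    _ = μ s + ∑' k : ℕ, ENNReal.ofReal (c k) * μ {x ∈ s | a * k < |g x|} := by
        rw [lintegral_add_left measurable_const, setLIntegral_one,
          lintegral_tsum fun k => (aemeasurable_const.indicator₀ (hlev k))]
        congr 1
        refine tsum_congr fun k => ?_
        rw [lintegral_indicator₀ (hlev k), setLIntegral_const, Measure.restrict_apply₀ (hlev k),
          Set.inter_comm]
        rfl
    _ ≤ μ s + ∑' k : ℕ, ENNReal.ofReal (c k * 2⁻¹ ^ k) * μ s := by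
        refine add_le_add le_rfl (ENNReal.tsum_le_tsum fun k => ?_)
        rw [ENNReal.ofReal_mul (hc k), mul_assoc, ENNReal.ofReal_pow (by norm_num),
          ENNReal.ofReal_inv_of_pos (by norm_num), ENNReal.ofReal_ofNat]
        gcongr
        exact hlevel k
    _ = ENNReal.ofReal (expBound a) * μ s := by
        rw [ENNReal.tsum_mul_right, ← ENNReal.ofReal_tsum_of_nonneg
          (fun k => mul_nonneg (hc k) (by positivity)) hsum.summable, hsum.tsum_eq, expBound,
          ENNReal.ofReal_add zero_le_one ?_, ENNReal.ofReal_one, add_mul, one_mul]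
        linarith [one_le_expBound ha.le h2, show expBound a = 1 + _ from rfl]

end MeasureSpace

section BallOscillation

variable {X : Type*} [PseudoMetricSpace X] [MeasurableSpace X] {μ : Measure X} {f : X → ℝ}
  {τ : ℝ}

def BallOscLe (μ : Measure X) (f : X → ℝ) (τ : ℝ) : Prop :=
  ∀ (z : X) (r : ℝ), 0 < r → ⨍ x in closedBall z r, |f x - ⨍ y in closedBall z r, f y ∂μ| ∂μ ≤ τ

def deviationSet (μ : Measure X) (f : X → ℝ) (z : X) (r t : ℝ) : Set X :=
  {x ∈ closedBall z r | t < |f x - ⨍ y in closedBall z r, f y ∂μ|}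

lemma BallOscLe.mono {τ' : ℝ} (h : BallOscLe μ f τ) (hτ : τ ≤ τ') : BallOscLe μ f τ' :=
  fun z r hr => (h z r hr).trans hτ

lemma BallOscLe.const_mul (h : BallOscLe μ f τ) (c : ℝ) :
    BallOscLe μ (fun x => c * f x) (|c| * τ) := by
  intro z r hr
  show ⨍ x in closedBall z r, |c * f x - ⨍ y in closedBall z r, c * f y ∂μ| ∂μ ≤ |c| * τ
  simp_rw [setAverage_const_mul, ← mul_sub, abs_mul, setAverage_const_mul]
  exact mul_le_mul_of_nonneg_left (h z r hr) (abs_nonneg c)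

lemma BallOscLe.integral_le (h : BallOscLe μ f τ) (z : X) {r : ℝ} (hr : 0 < r)
    (hB : 0 < μ.real (closedBall z r)) :
    ∫ x in closedBall z r, |f x - ⨍ y in closedBall z r, f y ∂μ| ∂μ ≤
      τ * μ.real (closedBall z r) :=
  (setAverage_le_iff_integral_le hB).1 (h z r hr)

lemma ae_exists_lt_setAverage [SecondCountableTopology X] [BorelSpace X] [IsLocallyFiniteMeasure μ]
    [IsUnifLocDoublingMeasure μ] {g : X → ℝ} (hg : LocallyIntegrable g μ) (t : ℝ) {R : ℝ}
    (hR : 0 < R) : ∀ᵐ x ∂μ, t < g x → ∃ ρ ∈ Ioc 0 R, t < ⨍ y in closedBall x ρ, g y ∂μ := by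
  filter_upwards [IsUnifLocDoublingMeasure.ae_tendsto_average μ hg 1] with x hx hxt
  have hlim := hx (fun _ => x) id tendsto_id
    (eventually_mem_nhdsWithin.mono fun ρ hρ => by simpa using le_of_lt hρ)
  obtain ⟨ρ, hlt, hρ⟩ := ((hlim.eventually (eventually_gt_nhds hxt)).and (Ioc_mem_nhdsGT hR)).exists
  exact ⟨ρ, hρ, hlt⟩

end BallOscillation

lemma exists_and_not_mul_of_le {P : ℝ → Prop} {c ρ₀ R : ℝ} (hc : 1 < c) (hρ₀ : 0 < ρ₀)
    (h₀ : P ρ₀) (hR : ∀ ρ, P ρ → ρ ≤ R) : ∃ ρ, P ρ ∧ ¬P (c * ρ) := by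
  by_contra! h
  have hpow : ∀ j : ℕ, P (c ^ j * ρ₀) := fun j => by
    induction j with
    | zero => simpa using h₀
    | succ j ih => simpa [pow_succ', mul_assoc] using h _ ih
  obtain ⟨j, hj⟩ := pow_unbounded_of_one_lt (R / ρ₀) hc
  linarith [(le_div_iff₀ hρ₀).2 (hR _ (hpow j))]

/-- The constant has to satisfy `1 + 10 ^ d ≤ C` (a ball of radius `≤ 10 r` containing `B(z, r)`)
and `2 · 5 ^ d (1 + 3 ^ d) 3 ^ d ≤ C` (Vitali `5r`-covering by balls inside `B(z, 3 r)`). -/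
def jnConst (d : ℕ) : ℝ := 5 * 45 ^ d

lemma jnConst_pos (d : ℕ) : 0 < jnConst d := by unfold jnConst; positivity

lemma one_add_ten_pow_le_jnConst (d : ℕ) : 1 + 10 ^ d ≤ jnConst d := by
  have h1 : (1 : ℝ) ≤ 45 ^ d := one_le_pow₀ (by norm_num)
  have h10 : (10 : ℝ) ^ d ≤ 45 ^ d := pow_le_pow_left₀ (by norm_num) (by norm_num) d
  unfold jnConst; linarith

lemma two_mul_five_pow_mul_le_jnConst (d : ℕ) :
    2 * (5 ^ d * ((1 + 3 ^ d) * 3 ^ d)) ≤ jnConst d := by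
  have h15 : (15 : ℝ) ^ d ≤ 45 ^ d := pow_le_pow_left₀ (by norm_num) (by norm_num) d
  have h : (5 : ℝ) ^ d * ((1 + 3 ^ d) * 3 ^ d) = 15 ^ d + 45 ^ d := by
    rw [show (45 : ℝ) = 5 * 3 * 3 by norm_num, show (15 : ℝ) = 5 * 3 by norm_num]
    simp only [mul_pow]; ring
  unfold jnConst; rw [h]; linarith [pow_pos (by norm_num : (0 : ℝ) < 45) d]

section AddHaar

variable {E : Type*} [NormedAddCommGroup E] [NormedSpace ℝ E] [FiniteDimensional ℝ E]
  [MeasurableSpace E] {μ : Measure E} [μ.IsAddHaarMeasure] {f : E → ℝ} {τ : ℝ}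

lemma measureReal_closedBall_pos (z : E) {r : ℝ} (hr : 0 < r) : 0 < μ.real (closedBall z r) :=
  ENNReal.toReal_pos (measure_closedBall_pos μ z hr).ne' measure_closedBall_lt_top.ne

lemma MeasureTheory.LocallyIntegrable.abs_sub_const (hf : LocallyIntegrable f μ) (c : ℝ) :
    LocallyIntegrable (fun x => |f x - c|) μ :=
  locallyIntegrable_iff.2 fun _ hK =>
    ((hf.integrableOn_isCompact hK).sub (integrableOn_const hK.measure_lt_top.ne)).abs

lemma MeasureTheory.LocallyIntegrable.integrableOn_abs_sub_closedBall (hf : LocallyIntegrable f μ)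
    (c : ℝ) (z : E) (r : ℝ) : IntegrableOn (fun x => |f x - c|) (closedBall z r) μ :=
  (hf.abs_sub_const c).integrableOn_isCompact (isCompact_closedBall z r)

lemma mem_deviationSet_of_integral_le (hf : LocallyIntegrable f μ) {b x : E} {R c s t : ℝ}
    (hR : 0 < R) (hx : x ∈ closedBall b R) (hxc : s + t < |f x - c|)
    (h : ∫ y in closedBall b R, |f y - c| ∂μ ≤ t * μ.real (closedBall b R)) :
    x ∈ deviationSet μ f b R s := by
  have hA := abs_setAverage_sub_le_of_integral_le measure_closedBall_lt_top.ne
    (measureReal_closedBall_pos b hR) (hf.integrableOn_isCompact (isCompact_closedBall b R)) h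
  exact ⟨hx, by linarith [abs_sub_le (f x) (⨍ y in closedBall b R, f y ∂μ) c]⟩

variable [BorelSpace E]

lemma measure_closedBall_le_mul (z z' : E) {r R k : ℝ} (hr : 0 ≤ r) (hk : 0 ≤ k)
    (hR : R ≤ k * r) :
    μ (closedBall z' R) ≤ ENNReal.ofReal (k ^ finrank ℝ E) * μ (closedBall z r) := by
  calc μ (closedBall z' R) ≤ μ (closedBall z' (k * r)) :=
        measure_mono (closedBall_subset_closedBall hR)
    _ = ENNReal.ofReal (k ^ finrank ℝ E) * μ (closedBall z r) := by
        rw [Measure.addHaar_closedBall' μ z' (by positivity), Measure.addHaar_closedBall' μ z hr,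
          mul_pow, ENNReal.ofReal_mul (by positivity), mul_assoc]

lemma measureReal_closedBall_le_mul (z z' : E) {r R k : ℝ} (hr : 0 ≤ r) (hk : 0 ≤ k)
    (hR : R ≤ k * r) :
    μ.real (closedBall z' R) ≤ k ^ finrank ℝ E * μ.real (closedBall z r) := by
  have h := ENNReal.toReal_mono (ENNReal.mul_ne_top ENNReal.ofReal_ne_top
    measure_closedBall_lt_top.ne) (measure_closedBall_le_mul (μ := μ) z z' hr hk hR)
  rwa [ENNReal.toReal_mul, ENNReal.toReal_ofReal (by positivity)] at h

lemma BallOscLe.integral_abs_sub_setAverage_le (hosc : BallOscLe μ f τ)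
    (hf : LocallyIntegrable f μ) (hτ : 0 ≤ τ) {z₀ z : E} {r₀ R k : ℝ} (hr₀ : 0 < r₀) (hR : 0 < R)
    (hk : 0 ≤ k) (hRk : R ≤ k * r₀) (hsub : closedBall z₀ r₀ ⊆ closedBall z R) :
    ∫ x in closedBall z R, |f x - ⨍ y in closedBall z₀ r₀, f y ∂μ| ∂μ ≤
      (1 + k ^ finrank ℝ E) * τ * μ.real (closedBall z R) := by
  set A₀ := ⨍ y in closedBall z₀ r₀, f y ∂μ
  set A := ⨍ y in closedBall z R, f y ∂μ
  have hB := measureReal_closedBall_pos (μ := μ) z hR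
  have hAA : |A₀ - A| ≤ k ^ finrank ℝ E * τ := by
    refine abs_setAverage_sub_le_of_integral_le measure_closedBall_lt_top.ne
      (measureReal_closedBall_pos z₀ hr₀) (hf.integrableOn_isCompact (isCompact_closedBall _ _)) ?_
    calc ∫ x in closedBall z₀ r₀, |f x - A| ∂μ ≤ ∫ x in closedBall z R, |f x - A| ∂μ :=
          setIntegral_mono_set (hf.integrableOn_abs_sub_closedBall A z R)
            (ae_of_all _ fun _ => abs_nonneg _) hsub.eventuallyLE
      _ ≤ τ * μ.real (closedBall z R) := hosc.integral_le z hR hB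
      _ ≤ τ * (k ^ finrank ℝ E * μ.real (closedBall z₀ r₀)) := by
          gcongr; exact measureReal_closedBall_le_mul z₀ z hr₀.le hk hRk
      _ = k ^ finrank ℝ E * τ * μ.real (closedBall z₀ r₀) := by ring
  calc ∫ x in closedBall z R, |f x - A₀| ∂μ ≤ ∫ x in closedBall z R, (|f x - A| + |A - A₀|) ∂μ :=
        integral_mono (hf.integrableOn_abs_sub_closedBall A₀ z R)
          ((hf.integrableOn_abs_sub_closedBall A z R).add
            (integrableOn_const measure_closedBall_lt_top.ne)) fun x => abs_sub_le _ _ _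
    _ = ∫ x in closedBall z R, |f x - A| ∂μ + |A - A₀| * μ.real (closedBall z R) := by
        rw [integral_add (hf.integrableOn_abs_sub_closedBall A z R)
          (integrableOn_const measure_closedBall_lt_top.ne), setIntegral_const, smul_eq_mul,
          mul_comm (μ.real _)]
    _ ≤ τ * μ.real (closedBall z R) + k ^ finrank ℝ E * τ * μ.real (closedBall z R) := by
        gcongr
        · exact hosc.integral_le z hR hB
        · rwa [abs_sub_comm]
    _ = (1 + k ^ finrank ℝ E) * τ * μ.real (closedBall z R) := by ring

/-- The radius is the last of `ρ₀, 5 ρ₀, 5² ρ₀, …` with large average, `ρ₀` coming from Lebesgue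
differentiation of `|f - A₀|`; once `5 ρ > 2 r₀` the ball contains `B(z₀, r₀)`, so its average is
small by `BallOscLe.integral_abs_sub_setAverage_le`. -/
lemma BallOscLe.ae_exists_stopping_radius (hosc : BallOscLe μ f τ) (hf : LocallyIntegrable f μ)
    (hτ : 0 ≤ τ) (z₀ : E) {r₀ : ℝ} (hr₀ : 0 < r₀) :
    ∀ᵐ x ∂μ, x ∈ deviationSet μ f z₀ r₀ (jnConst (finrank ℝ E) * τ) → ∃ ρ ∈ Ioc 0 (2 * r₀),
      jnConst (finrank ℝ E) * τ * μ.real (closedBall x ρ) <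
        ∫ y in closedBall x ρ, |f y - ⨍ y in closedBall z₀ r₀, f y ∂μ| ∂μ ∧
      ∫ y in closedBall x (5 * ρ), |f y - ⨍ y in closedBall z₀ r₀, f y ∂μ| ∂μ ≤
        jnConst (finrank ℝ E) * τ * μ.real (closedBall x (5 * ρ)) := by
  set t := jnConst (finrank ℝ E) * τ
  set A₀ := ⨍ y in closedBall z₀ r₀, f y ∂μ
  filter_upwards [ae_exists_lt_setAverage (hf.abs_sub_const A₀) t (by positivity : 0 < 2 * r₀)]
    with x hx hxS
  obtain ⟨ρ₀, hρ₀, hlt⟩ := hx hxS.2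
  obtain ⟨ρ, ⟨hρ, hρlt⟩, hstop⟩ := exists_and_not_mul_of_le (P := fun ρ => ρ ∈ Ioc 0 (2 * r₀) ∧
      t * μ.real (closedBall x ρ) < ∫ y in closedBall x ρ, |f y - A₀| ∂μ)
    (by norm_num : (1 : ℝ) < 5) hρ₀.1
    ⟨hρ₀, (lt_setAverage_iff_lt_integral (measureReal_closedBall_pos x hρ₀.1)).1 hlt⟩
    fun ρ h => h.1.2
  refine ⟨ρ, hρ, hρlt, ?_⟩
  by_cases h5 : 5 * ρ ≤ 2 * r₀
  · exact not_lt.1 fun h => hstop ⟨⟨by linarith [hρ.1], h5⟩, h⟩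
  · have hsub : closedBall z₀ r₀ ⊆ closedBall x (5 * ρ) :=
      closedBall_subset_closedBall' (by rw [dist_comm]; linarith [mem_closedBall.1 hxS.1])
    refine (hosc.integral_abs_sub_setAverage_le hf hτ hr₀ (by linarith [hρ.1])
      (by norm_num : (0 : ℝ) ≤ 10) (by linarith [hρ.2]) hsub).trans ?_
    exact mul_le_mul_of_nonneg_right
      (mul_le_mul_of_nonneg_right (one_add_ten_pow_le_jnConst _) hτ) measureReal_nonneg

/-- Chebyshev on the disjoint balls, all of which lie in `B(z₀, 3 r₀)`. -/
lemma BallOscLe.mul_tsum_measure_le (hosc : BallOscLe μ f τ) (hf : LocallyIntegrable f μ)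
    (hτ : 0 ≤ τ) {z₀ : E} {r₀ : ℝ} (hr₀ : 0 < r₀) {u : Set E} (hu : u.Countable) {ρ : E → ℝ}
    (hd : u.PairwiseDisjoint fun b => closedBall b (ρ b))
    (hub : ∀ b ∈ u, b ∈ closedBall z₀ r₀ ∧ ρ b ≤ 2 * r₀) {t : ℝ} (ht : 0 ≤ t)
    (hlarge : ∀ b ∈ u, t * μ.real (closedBall b (ρ b)) <
      ∫ y in closedBall b (ρ b), |f y - ⨍ y in closedBall z₀ r₀, f y ∂μ| ∂μ) :
    ENNReal.ofReal t * ∑' b : u, μ (closedBall b (ρ b)) ≤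
      ENNReal.ofReal ((1 + 3 ^ finrank ℝ E) * 3 ^ finrank ℝ E * τ * μ.real (closedBall z₀ r₀)) := by
  have := hu.to_subtype
  set A₀ := ⨍ y in closedBall z₀ r₀, f y ∂μ
  have hofReal : ∀ z r, ENNReal.ofReal (∫ y in closedBall z r, |f y - A₀| ∂μ) =
      ∫⁻ y in closedBall z r, ENNReal.ofReal |f y - A₀| ∂μ := fun z r =>
    ofReal_integral_eq_lintegral_ofReal (hf.integrableOn_abs_sub_closedBall A₀ z r)
      (ae_of_all _ fun _ => abs_nonneg _)
  refine (mul_tsum_measure_le_setLIntegral (t := fun b : u => closedBall (b : E) (ρ b))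
    (s := closedBall z₀ (3 * r₀)) (g := fun y => ENNReal.ofReal |f y - A₀|)
    (fun _ => measurableSet_closedBall)
    (fun i j hij => hd i.2 j.2 (Subtype.coe_injective.ne hij))
    (fun b => closedBall_subset_closedBall'
      (by linarith [(hub b b.2).2, mem_closedBall.1 (hub b b.2).1])) fun b => ?_).trans ?_
  · rw [← hofReal, ← ofReal_measureReal measure_closedBall_lt_top.ne, ← ENNReal.ofReal_mul ht]
    exact ENNReal.ofReal_le_ofReal (hlarge b b.2).le
  · rw [← hofReal]
    refine ENNReal.ofReal_le_ofReal ((hosc.integral_abs_sub_setAverage_le hf hτ hr₀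
      (by linarith) (by norm_num) le_rfl (closedBall_subset_closedBall (by linarith))).trans ?_)
    have := measureReal_closedBall_le_mul (μ := μ) z₀ z₀ hr₀.le (by norm_num : (0 : ℝ) ≤ 3) le_rfl
    calc (1 + 3 ^ finrank ℝ E) * τ * μ.real (closedBall z₀ (3 * r₀))
        ≤ (1 + 3 ^ finrank ℝ E) * τ * (3 ^ finrank ℝ E * μ.real (closedBall z₀ r₀)) := by gcongr
      _ = _ := by ring

lemma BallOscLe.five_pow_mul_tsum_measure_le (hosc : BallOscLe μ f τ)
    (hf : LocallyIntegrable f μ) (hτ : 0 < τ) {z₀ : E} {r₀ : ℝ} (hr₀ : 0 < r₀) {u : Set E}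
    (hu : u.Countable) {ρ : E → ℝ} (hd : u.PairwiseDisjoint fun b => closedBall b (ρ b))
    (hub : ∀ b ∈ u, b ∈ closedBall z₀ r₀ ∧ ρ b ≤ 2 * r₀)
    (hlarge : ∀ b ∈ u, jnConst (finrank ℝ E) * τ * μ.real (closedBall b (ρ b)) <
      ∫ y in closedBall b (ρ b), |f y - ⨍ y in closedBall z₀ r₀, f y ∂μ| ∂μ) :
    ENNReal.ofReal (5 ^ finrank ℝ E) * ∑' b : u, μ (closedBall b (ρ b)) ≤
      2⁻¹ * μ (closedBall z₀ r₀) := by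
  set d := finrank ℝ E
  have ht : 0 < jnConst d * τ := mul_pos (jnConst_pos d) hτ
  have hm := measureReal_nonneg (μ := μ) (s := closedBall z₀ r₀)
  rw [← ENNReal.mul_le_mul_iff_right (ENNReal.ofReal_pos.2 ht).ne' ENNReal.ofReal_ne_top,
    mul_left_comm]
  calc ENNReal.ofReal (5 ^ d) * (ENNReal.ofReal (jnConst d * τ) * ∑' b : u, μ (closedBall b (ρ b)))
      ≤ ENNReal.ofReal (5 ^ d) *
          ENNReal.ofReal ((1 + 3 ^ d) * 3 ^ d * τ * μ.real (closedBall z₀ r₀)) := by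
        gcongr
        exact hosc.mul_tsum_measure_le hf hτ.le hr₀ hu hd hub ht.le hlarge
    _ ≤ ENNReal.ofReal (jnConst d * τ * 2⁻¹ * μ.real (closedBall z₀ r₀)) := by
        rw [← ENNReal.ofReal_mul (by positivity)]
        apply ENNReal.ofReal_le_ofReal
        nlinarith [mul_le_mul_of_nonneg_right (two_mul_five_pow_mul_le_jnConst d)
          (mul_nonneg hτ.le hm)]
    _ = ENNReal.ofReal (jnConst d * τ) * (2⁻¹ * μ (closedBall z₀ r₀)) := by
        rw [ENNReal.ofReal_mul (by positivity), ENNReal.ofReal_mul ht.le,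
          ofReal_measureReal measure_closedBall_lt_top.ne,
          ENNReal.ofReal_inv_of_pos two_pos, ENNReal.ofReal_ofNat, mul_assoc]

lemma BallOscLe.measure_deviationSet_succ_le (hosc : BallOscLe μ f τ)
    (hf : LocallyIntegrable f μ) (hτ : 0 < τ) {k : ℕ}
    (ih : ∀ (z : E) (r : ℝ), 0 < r →
      μ (deviationSet μ f z r (2 * jnConst (finrank ℝ E) * τ * k)) ≤ 2⁻¹ ^ k * μ (closedBall z r))
    (z₀ : E) {r₀ : ℝ} (hr₀ : 0 < r₀) :
    μ (deviationSet μ f z₀ r₀ (2 * jnConst (finrank ℝ E) * τ * (k + 1))) ≤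
      2⁻¹ ^ (k + 1) * μ (closedBall z₀ r₀) := by
  set C := jnConst (finrank ℝ E)
  set A₀ := ⨍ y in closedBall z₀ r₀, f y ∂μ
  set S := deviationSet μ f z₀ r₀ (2 * C * τ * (k + 1))
  have hCτ : 0 < C * τ := mul_pos (jnConst_pos _) hτ
  set Good : E → ℝ → Prop := fun x ρ => ρ ∈ Ioc 0 (2 * r₀) ∧
    C * τ * μ.real (closedBall x ρ) < ∫ y in closedBall x ρ, |f y - A₀| ∂μ ∧
    ∫ y in closedBall x (5 * ρ), |f y - A₀| ∂μ ≤ C * τ * μ.real (closedBall x (5 * ρ))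
  set S' := {x ∈ S | ∃ ρ, Good x ρ}
  have hSS' : μ S ≤ μ S' := measure_mono_ae <|
    (hosc.ae_exists_stopping_radius hf hτ.le z₀ hr₀).mono fun x hx hxS => ⟨hxS, hx ⟨hxS.1,
      by nlinarith [hxS.2, mul_nonneg hCτ.le (Nat.cast_nonneg (α := ℝ) k)]⟩⟩
  choose! ρ hρ using fun x (hx : x ∈ S') => hx.2
  obtain ⟨u, huS, hud, hucov⟩ := Vitali.exists_disjoint_subfamily_covering_enlargement_closedBall
    S' id ρ (2 * r₀) (fun x hx => (hρ x hx).1.2) 5 (by norm_num)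
  have hu : u.Countable := hud.countable_of_nonempty_interior fun b hb => by
    simpa [interior_closedBall _ (hρ b (huS hb)).1.1.ne'] using (hρ b (huS hb)).1.1
  have := hu.to_subtype
  have hcov : S' ⊆ ⋃ b : u, deviationSet μ f b (5 * ρ b) (2 * C * τ * k) := fun x hx => by
    obtain ⟨b, hbu, hsub⟩ := hucov x hx
    obtain ⟨hρb, -, hstop⟩ := hρ b (huS hbu)
    exact mem_iUnion.2 ⟨⟨b, hbu⟩, mem_deviationSet_of_integral_le hf (by linarith [hρb.1])
      (hsub (mem_closedBall_self (hρ x hx).1.1.le)) (by linarith [hx.1.2]) hstop⟩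
  calc μ S ≤ ∑' b : u, μ (deviationSet μ f b (5 * ρ b) (2 * C * τ * k)) :=
        hSS'.trans ((measure_mono hcov).trans (measure_iUnion_le _))
    _ ≤ ∑' b : u, 2⁻¹ ^ k * (ENNReal.ofReal (5 ^ finrank ℝ E) * μ (closedBall b (ρ b))) :=
        ENNReal.tsum_le_tsum fun b => by
          have hb := (hρ b (huS b.2)).1.1
          exact (ih b _ (by linarith)).trans
            (by gcongr; exact measure_closedBall_le_mul _ _ hb.le (by norm_num) le_rfl)
    _ = 2⁻¹ ^ k * (ENNReal.ofReal (5 ^ finrank ℝ E) * ∑' b : u, μ (closedBall b (ρ b))) := by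
        rw [ENNReal.tsum_mul_left, ENNReal.tsum_mul_left]
    _ ≤ 2⁻¹ ^ k * (2⁻¹ * μ (closedBall z₀ r₀)) := by
        gcongr 2⁻¹ ^ k * ?_
        exact hosc.five_pow_mul_tsum_measure_le hf hτ hr₀ hu hud
          (fun b hb => ⟨(huS hb).1.1, (hρ b (huS hb)).1.2⟩) fun b hb => (hρ b (huS hb)).2.1
    _ = 2⁻¹ ^ (k + 1) * μ (closedBall z₀ r₀) := by rw [pow_succ, mul_assoc]

theorem BallOscLe.measure_deviationSet_le (hosc : BallOscLe μ f τ) (hf : LocallyIntegrable f μ)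
    (hτ : 0 < τ) (k : ℕ) (z : E) {r : ℝ} (hr : 0 < r) :
    μ (deviationSet μ f z r (2 * jnConst (finrank ℝ E) * τ * k)) ≤
      2⁻¹ ^ k * μ (closedBall z r) := by
  induction k generalizing z r with
  | zero => rw [pow_zero, one_mul]; exact measure_mono (sep_subset _ _)
  | succ k ih => exact_mod_cast hosc.measure_deviationSet_succ_le hf hτ (fun z r hr => ih z hr) z hr

theorem BallOscLe.setLIntegral_exp_le (hosc : BallOscLe μ f τ) (hf : LocallyIntegrable f μ)
    (hτ : 0 < τ) (h2 : exp (2 * jnConst (finrank ℝ E) * τ) < 2) (z : E) {r : ℝ} (hr : 0 < r) :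
    ∫⁻ x in closedBall z r, ENNReal.ofReal (exp (f x)) ∂μ ≤
      ENNReal.ofReal (exp (⨍ y in closedBall z r, f y ∂μ) *
        expBound (2 * jnConst (finrank ℝ E) * τ)) * μ (closedBall z r) := by
  set A := ⨍ y in closedBall z r, f y ∂μ
  have hexp := setLIntegral_exp_abs_le (g := fun x => f x - A)
    (hf.aestronglyMeasurable.aemeasurable.restrict.sub_const A)
    (mul_pos (mul_pos two_pos (jnConst_pos _)) hτ) h2
    fun k => hosc.measure_deviationSet_le hf hτ k z hr
  calc ∫⁻ x in closedBall z r, ENNReal.ofReal (exp (f x)) ∂μ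
      ≤ ∫⁻ x in closedBall z r, ENNReal.ofReal (exp A) * ENNReal.ofReal (exp |f x - A|) ∂μ :=
        lintegral_mono fun x => by
          rw [← ENNReal.ofReal_mul (exp_pos _).le, ← exp_add]
          exact ENNReal.ofReal_le_ofReal (exp_le_exp.2 (by linarith [le_abs_self (f x - A)]))
    _ = ENNReal.ofReal (exp A) * ∫⁻ x in closedBall z r, ENNReal.ofReal (exp |f x - A|) ∂μ :=
        lintegral_const_mul' _ _ ENNReal.ofReal_ne_top
    _ ≤ _ := by
        rw [ENNReal.ofReal_mul (exp_pos _).le, mul_assoc]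
        gcongr

theorem BallOscLe.integrableOn_exp (hosc : BallOscLe μ f τ) (hf : LocallyIntegrable f μ)
    (hτ : 0 < τ) (h2 : exp (2 * jnConst (finrank ℝ E) * τ) < 2) (z : E) {r : ℝ} (hr : 0 < r) :
    IntegrableOn (fun x => exp (f x)) (closedBall z r) μ := by
  refine ⟨(continuous_exp.comp_aestronglyMeasurable hf.aestronglyMeasurable).restrict, ?_⟩
  rw [hasFiniteIntegral_iff_ofReal (ae_of_all _ fun x => (exp_pos _).le)]
  exact (hosc.setLIntegral_exp_le hf hτ h2 z hr).trans_lt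
    (ENNReal.mul_lt_top ENNReal.ofReal_lt_top measure_closedBall_lt_top)

theorem BallOscLe.locallyIntegrable_exp (hosc : BallOscLe μ f τ) (hf : LocallyIntegrable f μ)
    (hτ : 0 < τ) (h2 : exp (2 * jnConst (finrank ℝ E) * τ) < 2) :
    LocallyIntegrable (fun x => exp (f x)) μ := fun x =>
  ⟨closedBall x 1, closedBall_mem_nhds x one_pos, hosc.integrableOn_exp hf hτ h2 x one_pos⟩

theorem BallOscLe.setAverage_exp_le (hosc : BallOscLe μ f τ) (hf : LocallyIntegrable f μ)
    (hτ : 0 < τ) (h2 : exp (2 * jnConst (finrank ℝ E) * τ) < 2) (z : E) {r : ℝ} (hr : 0 < r) :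
    ⨍ x in closedBall z r, exp (f x) ∂μ ≤
      exp (⨍ y in closedBall z r, f y ∂μ) * expBound (2 * jnConst (finrank ℝ E) * τ) := by
  rw [setAverage_le_iff_integral_le (measureReal_closedBall_pos z hr),
    integral_eq_lintegral_of_nonneg_ae (ae_of_all _ fun x => (exp_pos _).le)
      (hosc.integrableOn_exp hf hτ h2 z hr).aestronglyMeasurable]
  refine (ENNReal.toReal_mono (ENNReal.mul_ne_top ENNReal.ofReal_ne_top
    measure_closedBall_lt_top.ne) (hosc.setLIntegral_exp_le hf hτ h2 z hr)).trans_eq ?_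
  rw [ENNReal.toReal_mul, ENNReal.toReal_ofReal, measureReal_def]
  exact mul_nonneg (exp_pos _).le (zero_le_one.trans (one_le_expBound (by
    have := jnConst_pos (finrank ℝ E); positivity) h2))

end AddHaar

lemma exists_expBound_rpow_le {p ε : ℝ} (hp : 0 < p) (hε : 0 < ε) :
    ∃ a, 0 < a ∧ exp a < 2 ∧ expBound a ^ p ≤ 1 + ε := by
  have hcont : ContinuousAt (fun a => expBound a ^ p) 0 := by
    refine ContinuousAt.rpow_const ?_ (Or.inr hp.le)
    refine continuousAt_const.add ((continuous_exp.continuousAt.sub continuousAt_const).div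
      (continuousAt_const.sub (continuous_exp.continuousAt.div_const 2)) ?_)
    norm_num
  have hlim : Tendsto (fun a => expBound a ^ p) (𝓝[>] 0) (𝓝 1) := by
    simpa [expBound] using hcont.tendsto.mono_left nhdsWithin_le_nhds
  have hexp : Tendsto exp (𝓝[>] 0) (𝓝 (exp 0)) :=
    (continuous_exp.tendsto 0).mono_left nhdsWithin_le_nhds
  rw [exp_zero] at hexp
  obtain ⟨a, ha, h2, hle⟩ := (eventually_mem_nhdsWithin.and
    ((hexp.eventually (eventually_lt_nhds one_lt_two)).and
      (hlim.eventually (eventually_le_nhds (by linarith : (1 : ℝ) < 1 + ε))))).exists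
  exact ⟨a, ha, h2, hle⟩

section Cubes

variable {n : ℕ}

lemma isCube_iff_exists_closedBall {Q : Set (Fin n → ℝ)} :
    IsCube Q ↔ ∃ (z : Fin n → ℝ) (r : ℝ), 0 < r ∧ Q = closedBall z r := by
  constructor
  · rintro ⟨a, h, hh, rfl⟩
    refine ⟨fun i => a i + h / 2, h / 2, by positivity, ?_⟩
    rw [closedBall_pi _ (by positivity)]
    exact pi_congr rfl fun i _ => by rw [Real.closedBall_eq_Icc]; congr 1 <;> ring
  · rintro ⟨z, r, hr, rfl⟩
    refine ⟨fun i => z i - r, 2 * r, by positivity, ?_⟩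
    rw [closedBall_pi _ hr.le]
    exact pi_congr rfl fun i _ => by rw [Real.closedBall_eq_Icc]; congr 1; ring

lemma cubeAvg_eq_setAverage (Q : Set (Fin n → ℝ)) (f : (Fin n → ℝ) → ℝ) :
    cubeAvg Q f = ⨍ x in Q, f x := by
  rw [cubeAvg, setAverage_eq, smul_eq_mul, measureReal_def]

lemma BmoLe.ballOscLe {f : (Fin n → ℝ) → ℝ} {δ : ℝ} (h : BmoLe f δ) : BallOscLe volume f δ :=
  fun z r hr => by
    simpa only [bmoOsc, cubeAvg_eq_setAverage] using
      h _ (isCube_iff_exists_closedBall.2 ⟨z, r, hr, rfl⟩)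

theorem apQ_exp_le {p : ℝ} (hp : 1 < p) {f : (Fin n → ℝ) → ℝ} (hf : LocallyIntegrable f volume)
    {τ : ℝ} (hτ : 0 < τ) (h₁ : BallOscLe volume f τ)
    (h₂ : BallOscLe volume (fun x => (1 - p / (p - 1)) * f x) τ)
    (h2 : exp (2 * jnConst (finrank ℝ (Fin n → ℝ)) * τ) < 2) {Q : Set (Fin n → ℝ)}
    (hQ : IsCube Q) :
    apQ p Q (fun x => exp (f x)) ≤ expBound (2 * jnConst (finrank ℝ (Fin n → ℝ)) * τ) ^ p := by
  obtain ⟨z, r, hr, rfl⟩ := isCube_iff_exists_closedBall.1 hQ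
  simp only [apQ, cubeAvg_eq_setAverage]
  set K := expBound (2 * jnConst (finrank ℝ (Fin n → ℝ)) * τ)
  set A := ⨍ y in closedBall z r, f y
  set c := 1 - p / (p - 1)
  have hp1 : 0 < p - 1 := by linarith
  have hc : c * (p - 1) = -1 := by simp only [c]; field_simp; ring
  have hK : 0 < K := zero_lt_one.trans_le (one_le_expBound (by
    have := jnConst_pos (finrank ℝ (Fin n → ℝ)); positivity) h2)
  have havg₁ := h₁.setAverage_exp_le hf hτ h2 z hr
  have havg₂ := h₂.setAverage_exp_le (hf.smul c) hτ h2 z hr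
  rw [setAverage_const_mul] at havg₂
  have hnonneg : 0 ≤ ⨍ x in closedBall z r, exp (c * f x) := by
    rw [setAverage_eq]
    exact smul_nonneg (inv_nonneg.2 measureReal_nonneg) (integral_nonneg fun x => (exp_pos _).le)
  have hw : ∀ x, exp (f x) ^ c = exp (c * f x) := fun x => by rw [← exp_mul, mul_comm]
  simp only [hw]
  calc (⨍ x in closedBall z r, exp (f x)) * (⨍ x in closedBall z r, exp (c * f x)) ^ (p - 1)
      ≤ (exp A * K) * (exp (c * A) * K) ^ (p - 1) := by gcongr
    _ = exp (A + c * A * (p - 1)) * K ^ (1 + (p - 1)) := by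
        rw [mul_rpow (exp_pos _).le hK.le, ← exp_mul, rpow_add hK, rpow_one, exp_add]; ring
    _ = K ^ p := by
        rw [show A + c * A * (p - 1) = 0 by linear_combination A * hc, exp_zero, one_mul,
          add_sub_cancel]

end Cubes

theorem exp_small_bmo_Ap_general {n : ℕ} (p : ℝ) (hp : 1 < p)
    (ε : ℝ) (hε : 0 < ε) :
    ∃ δ : ℝ, 0 < δ ∧
      ∀ f : (Fin n → ℝ) → ℝ, LocallyIntegrable f volume → BmoLe f δ →
        IsApWeight p (fun x => Real.exp (f x)) ∧
          ∀ Q : Set (Fin n → ℝ), IsCube Q →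
            apQ p Q (fun x => Real.exp (f x)) ≤ 1 + ε := by
  obtain ⟨a, ha, h2, hapε⟩ := exists_expBound_rpow_le (by linarith : 0 < p) hε
  have hC := mul_pos two_pos (jnConst_pos (finrank ℝ (Fin n → ℝ)))
  set τ := a / (2 * jnConst (finrank ℝ (Fin n → ℝ)))
  have hτ : 0 < τ := div_pos ha hC
  rw [← mul_div_cancel₀ a hC.ne'] at h2 hapε
  have hp1 : 0 < p - 1 := by linarith
  have hconj : |1 - p / (p - 1)| * min 1 (p - 1) ≤ 1 := by
    rw [show 1 - p / (p - 1) = -(p - 1)⁻¹ by field_simp; ring, abs_neg, abs_inv, abs_of_pos hp1]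
    exact inv_mul_le_one_of_le₀ (min_le_right _ _) hp1.le
  refine ⟨τ * min 1 (p - 1), mul_pos hτ (lt_min one_pos hp1), fun f hf hbmo => ?_⟩
  have h₁ : BallOscLe volume f τ :=
    hbmo.ballOscLe.mono (mul_le_of_le_one_right hτ.le (min_le_left _ _))
  have h₂ : BallOscLe volume (fun x => (1 - p / (p - 1)) * f x) τ :=
    (hbmo.ballOscLe.const_mul _).mono
      (by rw [mul_left_comm]; exact mul_le_of_le_one_right hτ.le hconj)
  have hap : ∀ Q, IsCube Q → apQ p Q (fun x => exp (f x)) ≤ 1 + ε := fun Q hQ =>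
    (apQ_exp_le hp hf hτ h₁ h₂ h2 hQ).trans hapε
  refine ⟨⟨⟨h₁.locallyIntegrable_exp hf hτ h2, ae_of_all _ fun x => exp_pos _⟩, ?_, 1 + ε, hap⟩,
    hap⟩
  have hw : (fun x => exp (f x) ^ (1 - p / (p - 1))) = fun x => exp ((1 - p / (p - 1)) * f x) :=
    funext fun x => by rw [← exp_mul, mul_comm]
  rw [hw]
  exact h₂.locallyIntegrable_exp (hf.smul (1 - p / (p - 1))) hτ h2

/-- For every `n ≥ 1`, `1 < p < ∞` and `ε > 0` there is `δ > 0` such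
that every locally integrable `f` with `‖f‖_* ≤ δ` satisfies: `e^f` is an `A_p` weight
with `[e^f]_{A_p} ≤ 1 + ε`. -/
theorem exp_small_bmo_Ap {n : ℕ} (hn : 1 ≤ n) (p : ℝ) (hp : 1 < p)
    (ε : ℝ) (hε : 0 < ε) :
    ∃ δ : ℝ, 0 < δ ∧
      ∀ f : (Fin n → ℝ) → ℝ, LocallyIntegrable f volume → BmoLe f δ →
        IsApWeight p (fun x => Real.exp (f x)) ∧
          ∀ Q : Set (Fin n → ℝ), IsCube Q →
            apQ p Q (fun x => Real.exp (f x)) ≤ 1 + ε :=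
  exp_small_bmo_Ap_general p hp ε hε
end
end

section
/- For every dimension n ≥ 1 and every 1 < p < ∞ there exists a constant c > 0, depending only on n and p, with the following property: for every locally integrable function f : ℝ^n → ℝ with 0 < ‖f‖_* < ∞ and every λ with 0 < λ ≤ c/‖f‖_*, the function e^{λf} is an A_p weight. -/
open MeasureTheory Real Filter
open scoped ENNReal

noncomputable section

/-!
Normalise `‖f‖_* ≤ 1` and fix a cube `Q`. The maximal dyadic subcubes of `Q` on which the
average of `|f - f_Q|` exceeds `2` (the Calderón–Zygmund cubes) have total measure at most
`|Q| / 2`; since their parents are not selected, on each of them `f` has average within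
`2 ^ (n + 1)` of `f_Q`; and outside them `|f - f_Q| ≤ 2` almost everywhere by Lebesgue
differentiation. Iterating inside the selected cubes gives the John–Nirenberg inequality
`|{x ∈ Q : |f - f_Q| ≥ 2 + k 2 ^ (n + 1)}| ≤ 2 ^ (-k) |Q|`, hence `⨍_Q exp (c |f - f_Q|) ≤ M`
for a small `c = c(n)`. When `λ ≤ c min(1, p - 1) / ‖f‖_*`, this applies to both `λ f` and
`-λ f / (p - 1)`, so for `w = exp (λ f)` we get
`⨍_Q w · (⨍_Q w^(1 - p')) ^ (p - 1) ≤ exp (λ f_Q) M · (exp (-λ f_Q / (p - 1)) M) ^ (p - 1) = M ^ p`.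
-/

open scoped Topology

lemma ofReal_exp_le_add_tsum_indicator {α : Type*} (g : α → ℝ) {t Δ c : ℝ} (hΔ : 0 < Δ)
    (hc : 0 ≤ c) (x : α) :
    ENNReal.ofReal (exp (c * g x)) ≤ ENNReal.ofReal (exp (c * t)) + ∑' k : ℕ,
      ENNReal.ofReal (exp (c * (t + (k + 1) * Δ))) * {y | t + k * Δ ≤ g y}.indicator 1 x := by
  rcases lt_or_ge (g x) t with hlt | hge
  · exact le_add_right (ENNReal.ofReal_le_ofReal (exp_le_exp.2 (by nlinarith)))
  · set k := ⌊(g x - t) / Δ⌋₊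
    have hk : k * Δ ≤ g x - t := (le_div_iff₀ hΔ).1 (Nat.floor_le (by positivity))
    have hk' : g x - t < (k + 1) * Δ := (div_lt_iff₀ hΔ).1 (Nat.lt_floor_add_one _)
    have hxk : x ∈ {y | t + k * Δ ≤ g y} := by show t + k * Δ ≤ g x; linarith
    refine le_add_left (le_trans ?_ (ENNReal.le_tsum k))
    rw [Set.indicator_of_mem hxk, Pi.one_apply, mul_one]
    exact ENNReal.ofReal_le_ofReal (exp_le_exp.2 (by nlinarith))

/-- The bound is `⊤` unless `exp (c * Δ) < 2`: then `1 - exp (c * Δ) / 2 = 0` in `ℝ≥0∞`. -/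
lemma lintegral_exp_le_of_geometric {α : Type*} [MeasurableSpace α] {μ : Measure α}
    {g : α → ℝ} (hg : AEMeasurable g μ) {t Δ c : ℝ} (hΔ : 0 < Δ) (hc : 0 ≤ c) {V : ℝ≥0∞}
    (hμ : μ Set.univ ≤ V) (hlevel : ∀ k : ℕ, μ {x | t + k * Δ ≤ g x} ≤ 2⁻¹ ^ k * V) :
    ∫⁻ x, ENNReal.ofReal (exp (c * g x)) ∂μ
      ≤ (ENNReal.ofReal (exp (c * t)) + ENNReal.ofReal (exp (c * (t + Δ))) *
          (1 - ENNReal.ofReal (exp (c * Δ)) * 2⁻¹)⁻¹) * V := by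
  set S : ℕ → Set α := fun k => {x | t + k * Δ ≤ g x}
  set b : ℕ → ℝ≥0∞ := fun k => ENNReal.ofReal (exp (c * (t + (k + 1) * Δ)))
  have hS : ∀ k, NullMeasurableSet (S k) μ := fun k => nullMeasurableSet_le aemeasurable_const hg
  have hterm : ∀ k, b k * (2⁻¹ ^ k * V) =
      ENNReal.ofReal (exp (c * (t + Δ))) * V * (ENNReal.ofReal (exp (c * Δ)) * 2⁻¹) ^ k := by
    intro k
    have hb : b k = ENNReal.ofReal (exp (c * (t + Δ))) * ENNReal.ofReal (exp (c * Δ)) ^ k := by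
      show ENNReal.ofReal (exp (c * (t + (k + 1) * Δ))) = _
      rw [← ENNReal.ofReal_pow (exp_pos _).le, ← exp_nat_mul,
        ← ENNReal.ofReal_mul (exp_pos _).le, ← exp_add]
      congr 2
      ring
    rw [hb, mul_pow]
    ring
  calc ∫⁻ x, ENNReal.ofReal (exp (c * g x)) ∂μ
      ≤ ∫⁻ x, ENNReal.ofReal (exp (c * t)) + ∑' k, b k * (S k).indicator 1 x ∂μ :=
        lintegral_mono (ofReal_exp_le_add_tsum_indicator g hΔ hc)
    _ = ENNReal.ofReal (exp (c * t)) * μ Set.univ + ∑' k, b k * μ (S k) := by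
        rw [lintegral_add_left measurable_const, lintegral_const,
          lintegral_tsum (f := fun k x => b k * (S k).indicator 1 x)
            fun k => (aemeasurable_one.indicator₀ (hS k)).const_mul _]
        congr 1
        exact tsum_congr fun k => by
          rw [lintegral_const_mul' _ _ ENNReal.ofReal_ne_top, lintegral_indicator_one₀ (hS k)]
    _ ≤ ENNReal.ofReal (exp (c * t)) * V + ∑' k, b k * (2⁻¹ ^ k * V) := by
        gcongr with k
        exact hlevel k
    _ = _ := by
        rw [tsum_congr hterm, ENNReal.tsum_mul_left, ENNReal.tsum_geometric]
        ring

namespace JohnNirenberg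

variable {n : ℕ}

def cubeIcc (a : Fin n → ℝ) (h : ℝ) : Set (Fin n → ℝ) :=
  Set.univ.pi fun i => Set.Icc (a i) (a i + h)

def cubeIco (a : Fin n → ℝ) (h : ℝ) : Set (Fin n → ℝ) :=
  Set.univ.pi fun i => Set.Ico (a i) (a i + h)

variable {a : Fin n → ℝ} {h : ℝ}

lemma isCube_cubeIcc (hh : 0 < h) : IsCube (cubeIcc a h) := ⟨a, h, hh, rfl⟩

lemma isCompact_cubeIcc (a : Fin n → ℝ) (h : ℝ) : IsCompact (cubeIcc a h) :=
  isCompact_univ_pi fun _ => isCompact_Icc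

lemma measurableSet_cubeIco (a : Fin n → ℝ) (h : ℝ) : MeasurableSet (cubeIco a h) :=
  MeasurableSet.univ_pi fun _ => measurableSet_Ico

lemma cubeIco_subset_cubeIcc (a : Fin n → ℝ) (h : ℝ) : cubeIco a h ⊆ cubeIcc a h :=
  Set.pi_mono fun _ _ => Set.Ico_subset_Icc_self

lemma cubeIco_ae_eq_cubeIcc (a : Fin n → ℝ) (h : ℝ) : cubeIco a h =ᵐ[volume] cubeIcc a h :=
  Measure.pi_Ico_ae_eq_pi_Icc

lemma volume_cubeIcc (a : Fin n → ℝ) (h : ℝ) : volume (cubeIcc a h) = ENNReal.ofReal h ^ n := by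
  rw [cubeIcc, volume_pi_pi]
  simp [Real.volume_Icc]

lemma volume_cubeIco (a : Fin n → ℝ) (h : ℝ) : volume (cubeIco a h) = volume (cubeIcc a h) :=
  measure_congr (cubeIco_ae_eq_cubeIcc a h)

lemma volume_cubeIcc_ne_top (a : Fin n → ℝ) (h : ℝ) : volume (cubeIcc a h) ≠ ⊤ :=
  (isCompact_cubeIcc a h).measure_lt_top.ne

lemma volume_cubeIcc_toReal (a : Fin n → ℝ) (hh : 0 ≤ h) :
    (volume (cubeIcc a h)).toReal = h ^ n := by
  rw [volume_cubeIcc, ENNReal.toReal_pow, ENNReal.toReal_ofReal hh]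

lemma exists_subset_cubeIcc {K : Set (Fin n → ℝ)} (hK : Bornology.IsBounded K) :
    ∃ (a : Fin n → ℝ) (h : ℝ), 0 < h ∧ K ⊆ cubeIcc a h := by
  obtain ⟨r, hr0, hr⟩ := hK.subset_closedBall_lt 0 0
  refine ⟨fun _ => -r, 2 * r, by positivity, fun x hx i _ => ?_⟩
  have hxi : |x i| ≤ r := by
    simpa using (dist_le_pi_dist x 0 i).trans (Metric.mem_closedBall.1 (hr hx))
  constructor <;> linarith [abs_le.1 hxi]

lemma locallyIntegrable_of_integrableOn_cubeIcc {u : (Fin n → ℝ) → ℝ}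
    (hu : ∀ (a : Fin n → ℝ) (h : ℝ), 0 < h → IntegrableOn u (cubeIcc a h)) :
    LocallyIntegrable u volume := by
  refine (locallyIntegrable_iff).2 fun K hK => ?_
  obtain ⟨a, h, hh, hK⟩ := exists_subset_cubeIcc hK.isBounded
  exact (hu a h hh).mono_set hK

lemma cubeAvg_nonneg (Q : Set (Fin n → ℝ)) {u : (Fin n → ℝ) → ℝ} (hu : ∀ x, 0 ≤ u x) :
    0 ≤ cubeAvg Q u :=
  mul_nonneg (by positivity) (integral_nonneg hu)

lemma abs_cubeAvg_le (Q : Set (Fin n → ℝ)) (u : (Fin n → ℝ) → ℝ) :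
    |cubeAvg Q u| ≤ cubeAvg Q fun x => |u x| := by
  rw [cubeAvg, cubeAvg, abs_mul, abs_of_nonneg (by positivity)]
  exact mul_le_mul_of_nonneg_left (abs_integral_le_integral_abs) (by positivity)

lemma cubeAvg_const_mul (Q : Set (Fin n → ℝ)) (c : ℝ) (u : (Fin n → ℝ) → ℝ) :
    cubeAvg Q (fun x => c * u x) = c * cubeAvg Q u := by
  rw [cubeAvg, cubeAvg, integral_const_mul]
  ring

lemma cubeAvg_sub_const (hh : 0 < h) {u : (Fin n → ℝ) → ℝ} (hu : IntegrableOn u (cubeIcc a h))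
    (c : ℝ) : cubeAvg (cubeIcc a h) (fun x => u x - c) = cubeAvg (cubeIcc a h) u - c := by
  have hV : (volume (cubeIcc a h)).toReal ≠ 0 := by
    rw [volume_cubeIcc_toReal a hh.le]; positivity
  rw [cubeAvg, cubeAvg, integral_sub hu (integrableOn_const (volume_cubeIcc_ne_top a h)),
    setIntegral_const, smul_eq_mul, measureReal_def]
  field_simp

lemma cubeAvg_le_iff (hh : 0 < h) (u : (Fin n → ℝ) → ℝ) (t : ℝ) :
    cubeAvg (cubeIcc a h) u ≤ t ↔ ∫ x in cubeIcc a h, u x ≤ t * h ^ n := by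
  rw [cubeAvg, volume_cubeIcc_toReal a hh.le, inv_mul_le_iff₀ (by positivity), mul_comm]

lemma cubeAvg_le_iff_lintegral_le (hh : 0 < h) {u : (Fin n → ℝ) → ℝ}
    (hu : IntegrableOn u (cubeIcc a h)) (hu0 : ∀ x, 0 ≤ u x) {t : ℝ} (ht : 0 ≤ t) :
    cubeAvg (cubeIcc a h) u ≤ t ↔
      ∫⁻ x in cubeIco a h, ENNReal.ofReal (u x) ≤ ENNReal.ofReal t * volume (cubeIco a h) := by
  rw [setLIntegral_congr (cubeIco_ae_eq_cubeIcc a h), volume_cubeIco, volume_cubeIcc,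
    ← ofReal_integral_eq_lintegral_ofReal hu (ae_of_all _ hu0), ← ENNReal.ofReal_pow hh.le,
    ← ENNReal.ofReal_mul ht, ENNReal.ofReal_le_ofReal_iff (by positivity), cubeAvg_le_iff hh]

def dyadicCorner (a : Fin n → ℝ) (h : ℝ) (m : ℕ) (j : Fin n → ℕ) : Fin n → ℝ :=
  fun i => a i + h * j i / 2 ^ m

def dyadicCube (a : Fin n → ℝ) (h : ℝ) (m : ℕ) (j : Fin n → ℕ) : Set (Fin n → ℝ) :=
  cubeIco (dyadicCorner a h m j) (h / 2 ^ m)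

def dyadicIndex (a : Fin n → ℝ) (h : ℝ) (m : ℕ) (x : Fin n → ℝ) : Fin n → ℕ :=
  fun i => ⌊(x i - a i) * 2 ^ m / h⌋₊

lemma mem_dyadicCube_iff (hh : 0 < h) {m : ℕ} {j : Fin n → ℕ} {x : Fin n → ℝ} :
    x ∈ dyadicCube a h m j ↔
      ∀ i, (j i : ℝ) ≤ (x i - a i) * 2 ^ m / h ∧ (x i - a i) * 2 ^ m / h < j i + 1 := by
  simp only [dyadicCube, dyadicCorner, cubeIco, Set.mem_univ_pi, Set.mem_Ico]
  refine forall_congr' fun i => and_congr ?_ ?_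
  · rw [le_div_iff₀ hh, ← le_sub_iff_add_le', div_le_iff₀ (by positivity), mul_comm]
  · rw [div_lt_iff₀ hh, add_assoc, ← sub_lt_iff_lt_add', ← add_div, lt_div_iff₀ (by positivity)]
    ring_nf

lemma dyadicIndex_eq_of_mem (hh : 0 < h) {m : ℕ} {j : Fin n → ℕ} {x : Fin n → ℝ}
    (hx : x ∈ dyadicCube a h m j) : dyadicIndex a h m x = j := by
  rw [mem_dyadicCube_iff hh] at hx
  funext i
  exact (Nat.floor_eq_iff ((Nat.cast_nonneg _).trans (hx i).1)).2 (hx i)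

lemma mem_dyadicCube_dyadicIndex (hh : 0 < h) (m : ℕ) {x : Fin n → ℝ} (hx : a ≤ x) :
    x ∈ dyadicCube a h m (dyadicIndex a h m x) := by
  rw [mem_dyadicCube_iff hh]
  have hx' : ∀ i, 0 ≤ (x i - a i) * 2 ^ m / h := fun i =>
    div_nonneg (mul_nonneg (sub_nonneg.2 (hx i)) (by positivity)) hh.le
  exact fun i => ⟨Nat.floor_le (hx' i), Nat.lt_floor_add_one _⟩

lemma le_of_mem_dyadicCube (hh : 0 < h) {m : ℕ} {j : Fin n → ℕ} {x : Fin n → ℝ}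
    (hx : x ∈ dyadicCube a h m j) : a ≤ x := by
  intro i
  have := ((Nat.cast_nonneg _).trans ((mem_dyadicCube_iff hh).1 hx i).1)
  rw [div_nonneg_iff] at this
  rcases this with ⟨h1, -⟩ | ⟨-, h2⟩
  · nlinarith [(pow_pos two_pos m : (0:ℝ) < 2 ^ m)]
  · linarith

lemma dyadicIndex_lt_of_mem (hh : 0 < h) (m : ℕ) {x : Fin n → ℝ} (hx : x ∈ cubeIco a h)
    (i : Fin n) : dyadicIndex a h m x i < 2 ^ m := by
  obtain ⟨h1, h2⟩ := hx i (Set.mem_univ i)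
  rw [dyadicIndex, Nat.floor_lt (div_nonneg (mul_nonneg (sub_nonneg.2 h1) (by positivity)) hh.le),
    div_lt_iff₀ hh]
  push_cast
  nlinarith [(pow_pos two_pos m : (0:ℝ) < 2 ^ m)]

lemma dyadicIndex_add (m k : ℕ) (x : Fin n → ℝ) (i : Fin n) :
    dyadicIndex a h m x i = dyadicIndex a h (m + k) x i / 2 ^ k := by
  rw [dyadicIndex, dyadicIndex, ← Nat.floor_div_natCast]
  congr 1
  push_cast
  rw [pow_add]
  field_simp

lemma dyadicIndex_of_mem_of_le (hh : 0 < h) {m m' : ℕ} (hm : m' ≤ m) {j : Fin n → ℕ}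
    {x : Fin n → ℝ} (hx : x ∈ dyadicCube a h m j) :
    dyadicIndex a h m' x = fun i => j i / 2 ^ (m - m') := by
  funext i
  rw [dyadicIndex_add m' (m - m'), Nat.add_sub_cancel' hm, dyadicIndex_eq_of_mem hh hx]

lemma dyadicCube_subset_cubeIco (hh : 0 < h) {m : ℕ} {j : Fin n → ℕ} (hj : ∀ i, j i < 2 ^ m) :
    dyadicCube a h m j ⊆ cubeIco a h := by
  intro x hx i _
  have hji : (j i : ℝ) + 1 ≤ 2 ^ m := by exact_mod_cast hj i
  obtain ⟨h1, h2⟩ := (mem_dyadicCube_iff hh).1 hx i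
  rw [le_div_iff₀ hh] at h1
  rw [div_lt_iff₀ hh] at h2
  have h2m : (0:ℝ) < 2 ^ m := by positivity
  constructor <;> nlinarith [(Nat.cast_nonneg (j i) : (0:ℝ) ≤ j i)]

lemma dyadicCube_succ_subset (hh : 0 < h) (m : ℕ) (j : Fin n → ℕ) :
    dyadicCube a h (m + 1) j ⊆ dyadicCube a h m fun i => j i / 2 := by
  intro x hx
  have := dyadicIndex_of_mem_of_le hh (Nat.le_add_right m 1) hx
  rw [Nat.add_sub_cancel_left, pow_one] at this
  exact this ▸ mem_dyadicCube_dyadicIndex hh m (le_of_mem_dyadicCube hh hx)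

lemma dyadicCube_zero (a : Fin n → ℝ) (h : ℝ) : dyadicCube a h 0 (fun _ => 0) = cubeIco a h := by
  have : dyadicCorner a h 0 (fun _ => 0) = a := funext fun i => by simp [dyadicCorner]
  rw [dyadicCube, this, pow_zero, div_one]

lemma measurableSet_dyadicCube (a : Fin n → ℝ) (h : ℝ) (m : ℕ) (j : Fin n → ℕ) :
    MeasurableSet (dyadicCube a h m j) :=
  measurableSet_cubeIco _ _

lemma volume_dyadicCube (a : Fin n → ℝ) (h : ℝ) (m : ℕ) (j : Fin n → ℕ) :
    volume (dyadicCube a h m j) = ENNReal.ofReal (h / 2 ^ m) ^ n := by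
  rw [dyadicCube, volume_cubeIco, volume_cubeIcc]

lemma volume_dyadicCube_succ (hh : 0 < h) (m : ℕ) (j j' : Fin n → ℕ) :
    volume (dyadicCube a h m j') = 2 ^ n * volume (dyadicCube a h (m + 1) j) := by
  rw [volume_dyadicCube, volume_dyadicCube, ← ENNReal.ofReal_ofNat 2,
    ← ENNReal.ofReal_pow zero_le_two, ← ENNReal.ofReal_pow (by positivity),
    ← ENNReal.ofReal_pow (by positivity),
    ← ENNReal.ofReal_mul (by positivity), ← mul_pow, pow_succ]
  congr 2
  field_simp

lemma cubeAvg_eq_setAverage (Q : Set (Fin n → ℝ)) (u : (Fin n → ℝ) → ℝ) :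
    cubeAvg Q u = ⨍ x in Q, u x := by
  rw [cubeAvg, setAverage_eq, smul_eq_mul, measureReal_def]

lemma closedBall_eq_cubeIcc (a : Fin n → ℝ) {r : ℝ} (hr : 0 ≤ r) :
    Metric.closedBall (fun i => a i + r) r = cubeIcc a (2 * r) := by
  rw [closedBall_pi _ hr, cubeIcc]
  refine Set.pi_congr rfl fun i _ => ?_
  rw [Real.closedBall_eq_Icc]
  congr 1 <;> ring

lemma ae_tendsto_cubeAvg_dyadicCube (hh : 0 < h) {g : (Fin n → ℝ) → ℝ}
    (hg : LocallyIntegrable g volume) :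
    ∀ᵐ x, a ≤ x → Tendsto (fun m => cubeAvg
      (cubeIcc (dyadicCorner a h m (dyadicIndex a h m x)) (h / 2 ^ m)) g) atTop (𝓝 (g x)) := by
  filter_upwards [IsUnifLocDoublingMeasure.ae_tendsto_average volume hg 1] with x hx hax
  set δ : ℕ → ℝ := fun m => h / 2 ^ m / 2
  set c : ℕ → Fin n → ℝ := fun m => dyadicCorner a h m (dyadicIndex a h m x)
  have hδ : ∀ m, 0 < δ m := fun m => by positivity
  have hδlim : Tendsto δ atTop (𝓝[>] 0) := by
    refine tendsto_nhdsWithin_iff.2 ⟨?_, Eventually.of_forall hδ⟩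
    have : δ = fun m : ℕ => h / 2 * (1 / 2 : ℝ) ^ m := funext fun m => by
      simp only [δ, one_div, inv_pow]; ring
    rw [this]
    simpa using (tendsto_pow_atTop_nhds_zero_of_lt_one (by norm_num)
      (by norm_num : (1 / 2 : ℝ) < 1)).const_mul (h / 2)
  have hball : ∀ m, Metric.closedBall (fun i => c m i + δ m) (δ m) = cubeIcc (c m) (h / 2 ^ m) :=
    fun m => by rw [closedBall_eq_cubeIcc _ (hδ m).le, mul_div_cancel₀ _ two_ne_zero]
  have hmem : ∀ m, x ∈ Metric.closedBall (fun i => c m i + δ m) (1 * δ m) := fun m => by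
    rw [one_mul, hball]
    exact cubeIco_subset_cubeIcc _ _ (mem_dyadicCube_dyadicIndex hh m hax)
  simpa only [cubeAvg_eq_setAverage, hball] using
    hx (fun m i => c m i + δ m) δ hδlim (Eventually.of_forall hmem)

def IsHeavy (a : Fin n → ℝ) (h : ℝ) (g : (Fin n → ℝ) → ℝ) (m : ℕ) (j : Fin n → ℕ) : Prop :=
  2 * volume (dyadicCube a h m j) < ∫⁻ x in dyadicCube a h m j, ENNReal.ofReal (g x)

/-- The Calderón–Zygmund cubes of `g` in `cubeIco a h`: heavy dyadic subcubes with no heavy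
dyadic ancestor. -/
def maximalHeavy (a : Fin n → ℝ) (h : ℝ) (g : (Fin n → ℝ) → ℝ) : Set (ℕ × (Fin n → ℕ)) :=
  {p | (∀ i, p.2 i < 2 ^ p.1) ∧ IsHeavy a h g p.1 p.2 ∧
    ∀ m < p.1, ¬ IsHeavy a h g m fun i => p.2 i / 2 ^ (p.1 - m)}

variable {g : (Fin n → ℝ) → ℝ}

lemma disjoint_of_mem_maximalHeavy (hh : 0 < h) {p q : ℕ × (Fin n → ℕ)}
    (hp : p ∈ maximalHeavy a h g) (hq : q ∈ maximalHeavy a h g) (hpq : p.1 < q.1) :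
    Disjoint (dyadicCube a h p.1 p.2) (dyadicCube a h q.1 q.2) := by
  refine Set.disjoint_left.2 fun x hxp hxq => hq.2.2 p.1 hpq ?_
  rw [← dyadicIndex_of_mem_of_le hh hpq.le hxq, dyadicIndex_eq_of_mem hh hxp]
  exact hp.2.1

lemma pairwiseDisjoint_maximalHeavy (hh : 0 < h) :
    (maximalHeavy a h g).PairwiseDisjoint fun p => dyadicCube a h p.1 p.2 := by
  intro p hp q hq hpq
  rcases lt_trichotomy p.1 q.1 with hlt | heq | hgt
  · exact disjoint_of_mem_maximalHeavy hh hp hq hlt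
  · refine Set.disjoint_left.2 fun x hxp hxq => hpq (Prod.ext heq ?_)
    rw [← dyadicIndex_eq_of_mem hh hxp, ← dyadicIndex_eq_of_mem hh hxq, heq]
  · exact (disjoint_of_mem_maximalHeavy hh hq hp hgt).symm

lemma exists_mem_maximalHeavy (hh : 0 < h) {x : Fin n → ℝ} (hx : x ∈ cubeIco a h) {m : ℕ}
    (hm : IsHeavy a h g m (dyadicIndex a h m x)) :
    ∃ p ∈ maximalHeavy a h g, x ∈ dyadicCube a h p.1 p.2 := by
  classical
  have hex : ∃ m, IsHeavy a h g m (dyadicIndex a h m x) := ⟨m, hm⟩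
  have hax : a ≤ x := fun i => (hx i (Set.mem_univ i)).1
  refine ⟨(Nat.find hex, dyadicIndex a h (Nat.find hex) x),
    ⟨dyadicIndex_lt_of_mem hh _ hx, Nat.find_spec hex, fun m' hm' => ?_⟩,
    mem_dyadicCube_dyadicIndex hh _ hax⟩
  rw [← dyadicIndex_of_mem_of_le hh hm'.le (mem_dyadicCube_dyadicIndex hh _ hax)]
  exact Nat.find_min hex hm'

/-- The parent of a Calderón–Zygmund cube is light, and has `2 ^ n` times its volume. -/
lemma lintegral_le_of_mem_maximalHeavy (hh : 0 < h)
    (hgQ : ∫⁻ x in cubeIco a h, ENNReal.ofReal (g x) ≤ volume (cubeIco a h))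
    {p : ℕ × (Fin n → ℕ)} (hp : p ∈ maximalHeavy a h g) :
    ∫⁻ x in dyadicCube a h p.1 p.2, ENNReal.ofReal (g x)
      ≤ 2 ^ (n + 1) * volume (dyadicCube a h p.1 p.2) := by
  obtain ⟨m | m, j⟩ := p
  · obtain ⟨hj, hheavy, -⟩ := hp
    have : j = fun _ => 0 := funext fun i => Nat.lt_one_iff.1 (by simpa using hj i)
    rw [IsHeavy, this, dyadicCube_zero] at hheavy
    exact absurd (hgQ.trans (le_mul_of_one_le_left' one_le_two)) hheavy.not_ge
  · have hparent := hp.2.2 m (Nat.lt_succ_self m)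
    rw [Nat.add_sub_cancel_left, pow_one, IsHeavy, not_lt] at hparent
    calc ∫⁻ x in dyadicCube a h (m + 1) j, ENNReal.ofReal (g x)
        ≤ ∫⁻ x in dyadicCube a h m (fun i => j i / 2), ENNReal.ofReal (g x) :=
          lintegral_mono_set (dyadicCube_succ_subset hh m j)
      _ ≤ 2 * volume (dyadicCube a h m (fun i => j i / 2)) := hparent
      _ = 2 ^ (n + 1) * volume (dyadicCube a h (m + 1) j) := by
          rw [volume_dyadicCube_succ hh m j, pow_succ]; ring

lemma tsum_volume_maximalHeavy_le (hh : 0 < h)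
    (hgQ : ∫⁻ x in cubeIco a h, ENNReal.ofReal (g x) ≤ volume (cubeIco a h)) :
    ∑' p : maximalHeavy a h g, volume (dyadicCube a h p.1.1 p.1.2) ≤ 2⁻¹ * volume (cubeIco a h) :=
  calc ∑' p : maximalHeavy a h g, volume (dyadicCube a h p.1.1 p.1.2)
      ≤ ∑' p : maximalHeavy a h g,
          2⁻¹ * ∫⁻ x in dyadicCube a h p.1.1 p.1.2, ENNReal.ofReal (g x) :=
        ENNReal.tsum_le_tsum fun p => by
          rw [← ENNReal.mul_le_iff_le_inv two_ne_zero ENNReal.ofNat_ne_top]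
          exact p.2.2.1.le
    _ = 2⁻¹ * ∫⁻ x in ⋃ p ∈ maximalHeavy a h g, dyadicCube a h p.1 p.2, ENNReal.ofReal (g x) := by
        rw [ENNReal.tsum_mul_left, lintegral_biUnion (Set.to_countable _)
          (fun p _ => measurableSet_dyadicCube a h p.1 p.2) (pairwiseDisjoint_maximalHeavy hh)]
    _ ≤ 2⁻¹ * volume (cubeIco a h) := by
        gcongr
        exact (lintegral_mono_set (Set.iUnion₂_subset fun p hp =>
          dyadicCube_subset_cubeIco hh hp.1)).trans hgQ

lemma ae_exists_mem_maximalHeavy (hh : 0 < h) (hg : LocallyIntegrable g volume)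
    (hg0 : ∀ x, 0 ≤ g x) :
    ∀ᵐ x, x ∈ cubeIco a h → 2 < g x → ∃ p ∈ maximalHeavy a h g, x ∈ dyadicCube a h p.1 p.2 := by
  filter_upwards [ae_tendsto_cubeAvg_dyadicCube (a := a) hh hg] with x hlim hx hgx
  obtain ⟨m, hm⟩ : ∃ m, IsHeavy a h g m (dyadicIndex a h m x) := by
    by_contra! hlight
    refine hgx.not_ge (le_of_tendsto (hlim fun i => (hx i (Set.mem_univ i)).1)
      (Eventually.of_forall fun m => ?_))
    have hm : (0 : ℝ) < h / 2 ^ m := by positivity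
    rw [cubeAvg_le_iff_lintegral_le hm (hg.integrableOn_isCompact (isCompact_cubeIcc _ _)) hg0
      zero_le_two, ENNReal.ofReal_ofNat]
    exact not_lt.1 (hlight m)
  exact exists_mem_maximalHeavy hh hx hm

variable {f : (Fin n → ℝ) → ℝ}

lemma locallyIntegrable_abs_sub (hf : LocallyIntegrable f volume) (c : ℝ) :
    LocallyIntegrable (fun x => |f x - c|) volume :=
  locallyIntegrable_iff.2 fun _ hK =>
    ((hf.integrableOn_isCompact hK).sub (integrableOn_const hK.measure_lt_top.ne)).abs

lemma lintegral_abs_sub_cubeAvg_le (hf : LocallyIntegrable f volume) (hbmo : BmoLe f 1)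
    (hh : 0 < h) (c : ℝ) (hc : c = cubeAvg (cubeIcc a h) f) :
    ∫⁻ x in cubeIco a h, ENNReal.ofReal |f x - c| ≤ volume (cubeIco a h) := by
  have hosc := hbmo _ (isCube_cubeIcc (a := a) hh)
  rw [bmoOsc, ← hc, cubeAvg_le_iff_lintegral_le hh
    ((locallyIntegrable_abs_sub hf c).integrableOn_isCompact (isCompact_cubeIcc a h))
    (fun _ => abs_nonneg _) zero_le_one, ENNReal.ofReal_one, one_mul] at hosc
  exact hosc

lemma abs_cubeAvg_sub_le_of_mem_maximalHeavy (hf : LocallyIntegrable f volume)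
    (hbmo : BmoLe f 1) (hh : 0 < h) {p : ℕ × (Fin n → ℕ)}
    (hp : p ∈ maximalHeavy a h fun x => |f x - cubeAvg (cubeIcc a h) f|) :
    |cubeAvg (cubeIcc (dyadicCorner a h p.1 p.2) (h / 2 ^ p.1)) f - cubeAvg (cubeIcc a h) f|
      ≤ 2 ^ (n + 1) := by
  set c := cubeAvg (cubeIcc a h) f
  have hm : (0 : ℝ) < h / 2 ^ p.1 := by positivity
  rw [← cubeAvg_sub_const hm (hf.integrableOn_isCompact (isCompact_cubeIcc _ _))]
  refine (abs_cubeAvg_le _ _).trans ?_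
  rw [cubeAvg_le_iff_lintegral_le hm ((locallyIntegrable_abs_sub hf c).integrableOn_isCompact
    (isCompact_cubeIcc _ _)) (fun _ => abs_nonneg _) (by positivity),
    ENNReal.ofReal_pow zero_le_two, ENNReal.ofReal_ofNat]
  exact lintegral_le_of_mem_maximalHeavy hh (lintegral_abs_sub_cubeAvg_le hf hbmo hh c rfl) hp

/-- The John–Nirenberg inequality. The induction restarts inside each Calderón–Zygmund cube of
`|f - f_Q|`, where `f` has moved by at most `2 ^ (n + 1)` from `f_Q`. -/
theorem volume_levelSet_le (hf : LocallyIntegrable f volume) (hbmo : BmoLe f 1) (k : ℕ)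
    (a : Fin n → ℝ) {h : ℝ} (hh : 0 < h) :
    volume ({x | 2 + k * 2 ^ (n + 1) ≤ |f x - cubeAvg (cubeIcc a h) f|} ∩ cubeIco a h)
      ≤ 2⁻¹ ^ k * volume (cubeIcc a h) := by
  induction k generalizing a h with
  | zero =>
    rw [pow_zero, one_mul, ← volume_cubeIco]
    exact measure_mono Set.inter_subset_right
  | succ k ih =>
    set c := cubeAvg (cubeIcc a h) f
    set M := maximalHeavy a h fun x => |f x - c|
    set cp : ℕ × (Fin n → ℕ) → ℝ := fun p =>
      cubeAvg (cubeIcc (dyadicCorner a h p.1 p.2) (h / 2 ^ p.1)) f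
    have hcover : ∀ᵐ x, x ∈ {x | 2 + (k + 1 : ℕ) * 2 ^ (n + 1) ≤ |f x - c|} ∩ cubeIco a h →
        x ∈ ⋃ p ∈ M, {x | 2 + k * 2 ^ (n + 1) ≤ |f x - cp p|} ∩ dyadicCube a h p.1 p.2 := by
      filter_upwards [ae_exists_mem_maximalHeavy hh (locallyIntegrable_abs_sub hf c)
        fun _ => abs_nonneg _] with x hx ⟨hlevel, hxQ⟩
      have hlevel : 2 + ((k : ℝ) + 1) * 2 ^ (n + 1) ≤ |f x - c| := by exact_mod_cast hlevel
      obtain ⟨p, hp, hxp⟩ := hx hxQ (by nlinarith [(by positivity : (0 : ℝ) < 2 ^ (n + 1))])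
      refine Set.mem_biUnion hp ⟨?_, hxp⟩
      have hcp : |cp p - c| ≤ 2 ^ (n + 1) := abs_cubeAvg_sub_le_of_mem_maximalHeavy hf hbmo hh hp
      have htri : |f x - c| ≤ |f x - cp p| + |cp p - c| := abs_sub_le _ _ _
      show 2 + k * 2 ^ (n + 1) ≤ |f x - cp p|
      linarith
    calc volume ({x | 2 + (k + 1 : ℕ) * 2 ^ (n + 1) ≤ |f x - c|} ∩ cubeIco a h)
        ≤ volume (⋃ p ∈ M, {x | 2 + k * 2 ^ (n + 1) ≤ |f x - cp p|} ∩ dyadicCube a h p.1 p.2) :=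
          measure_mono_ae hcover
      _ ≤ ∑' p : M,
            volume ({x | 2 + k * 2 ^ (n + 1) ≤ |f x - cp p|} ∩ dyadicCube a h p.1.1 p.1.2) :=
          measure_biUnion_le _ (Set.to_countable _) _
      _ ≤ ∑' p : M, 2⁻¹ ^ k * volume (dyadicCube a h p.1.1 p.1.2) :=
          ENNReal.tsum_le_tsum fun p => by
            rw [dyadicCube, volume_cubeIco]
            exact ih _ (by positivity)
      _ ≤ 2⁻¹ ^ k * (2⁻¹ * volume (cubeIco a h)) := by
          rw [ENNReal.tsum_mul_left]
          gcongr
          exact tsum_volume_maximalHeavy_le hh (lintegral_abs_sub_cubeAvg_le hf hbmo hh c rfl)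
      _ = 2⁻¹ ^ (k + 1) * volume (cubeIcc a h) := by
          rw [volume_cubeIco, pow_succ, mul_assoc]

/-- Chosen so that `exp (jnExponent n * 2 ^ (n + 1)) = √2 < 2`. -/
def jnExponent (n : ℕ) : ℝ := log 2 / (2 * 2 ^ (n + 1))

def jnConstant (n : ℕ) : ℝ≥0∞ :=
  ENNReal.ofReal (exp (jnExponent n * 2)) +
    ENNReal.ofReal (exp (jnExponent n * (2 + 2 ^ (n + 1)))) *
      (1 - ENNReal.ofReal (exp (jnExponent n * 2 ^ (n + 1))) * 2⁻¹)⁻¹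

lemma jnExponent_pos (n : ℕ) : 0 < jnExponent n :=
  div_pos (log_pos one_lt_two) (by positivity)

lemma jnConstant_ne_top (n : ℕ) : jnConstant n ≠ ⊤ := by
  have hexp : ENNReal.ofReal (exp (jnExponent n * 2 ^ (n + 1))) < 2 := by
    have : jnExponent n * 2 ^ (n + 1) = log 2 / 2 := by rw [jnExponent]; field_simp
    rw [this, ← ENNReal.ofReal_ofNat 2, ENNReal.ofReal_lt_ofReal_iff two_pos,
      ← lt_log_iff_exp_lt two_pos]
    linarith [log_pos one_lt_two]
  have hr : ENNReal.ofReal (exp (jnExponent n * 2 ^ (n + 1))) * 2⁻¹ < 1 :=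
    calc _ < 2 * 2⁻¹ := ENNReal.mul_lt_mul_left (by norm_num) (by norm_num) hexp
      _ = 1 := ENNReal.mul_inv_cancel two_ne_zero ENNReal.ofNat_ne_top
  refine ENNReal.add_ne_top.2 ⟨ENNReal.ofReal_ne_top, ENNReal.mul_ne_top ENNReal.ofReal_ne_top ?_⟩
  exact ENNReal.inv_ne_top.2 (tsub_pos_iff_lt.2 hr).ne'

lemma lintegral_exp_abs_sub_cubeAvg_le (hf : LocallyIntegrable f volume) (hbmo : BmoLe f 1)
    (hh : 0 < h) :
    ∫⁻ x in cubeIco a h, ENNReal.ofReal (exp (jnExponent n * |f x - cubeAvg (cubeIcc a h) f|))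
      ≤ jnConstant n * volume (cubeIcc a h) :=
  lintegral_exp_le_of_geometric
    (hf.aestronglyMeasurable.aemeasurable.sub_const _).abs.restrict
    (by positivity) (jnExponent_pos n).le
    (by rw [Measure.restrict_apply_univ, volume_cubeIco]) fun k => by
      rw [Measure.restrict_apply' (measurableSet_cubeIco a h)]
      exact volume_levelSet_le hf hbmo k a hh

lemma bmoLe_const_mul {B : ℝ} (hbmo : BmoLe f B) {c : ℝ} (hc : 0 ≤ c) :
    BmoLe (fun x => c * f x) (c * B) := by
  intro Q hQ
  have hosc : bmoOsc Q (fun x => c * f x) = c * bmoOsc Q f := by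
    rw [bmoOsc, bmoOsc, ← cubeAvg_const_mul, cubeAvg_const_mul]
    congr 1
    funext x
    rw [← mul_sub, abs_mul, abs_of_nonneg hc]
  rw [hosc]
  exact mul_le_mul_of_nonneg_left (hbmo Q hQ) hc

lemma exp_mul_eq_mul_exp_mul_sub (μ c : ℝ) :
    (fun x => exp (μ * f x)) = fun x => exp (μ * c) * exp (μ * (f x - c)) :=
  funext fun x => by rw [← exp_add]; ring_nf

section ExpIntegrability

variable {B μ : ℝ}

lemma lintegral_exp_mul_sub_cubeAvg_le (hf : LocallyIntegrable f volume) (hB : 0 < B)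
    (hbmo : BmoLe f B) (hμ : |μ| ≤ jnExponent n / B) (hh : 0 < h) :
    ∫⁻ x in cubeIco a h, ENNReal.ofReal (exp (μ * (f x - cubeAvg (cubeIcc a h) f)))
      ≤ jnConstant n * volume (cubeIco a h) := by
  set u : (Fin n → ℝ) → ℝ := fun x => B⁻¹ * f x
  have hu : BmoLe u 1 := by
    simpa only [inv_mul_cancel₀ hB.ne'] using bmoLe_const_mul hbmo (inv_nonneg.2 hB.le)
  have hpoint : ∀ x, μ * (f x - cubeAvg (cubeIcc a h) f)
      ≤ jnExponent n * |u x - cubeAvg (cubeIcc a h) u| := fun x => by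
    rw [cubeAvg_const_mul, ← mul_sub, abs_mul, abs_of_pos (inv_pos.2 hB), ← mul_assoc,
      ← div_eq_mul_inv]
    exact (le_abs_self _).trans ((abs_mul _ _).trans_le
      (mul_le_mul_of_nonneg_right hμ (abs_nonneg _)))
  rw [volume_cubeIco]
  exact (lintegral_mono fun x => ENNReal.ofReal_le_ofReal (exp_le_exp.2 (hpoint x))).trans
    (lintegral_exp_abs_sub_cubeAvg_le (hf.smul B⁻¹) hu hh)

lemma integrableOn_exp_mul_sub_cubeAvg (hf : LocallyIntegrable f volume) (hB : 0 < B)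
    (hbmo : BmoLe f B) (hμ : |μ| ≤ jnExponent n / B) (hh : 0 < h) :
    IntegrableOn (fun x => exp (μ * (f x - cubeAvg (cubeIcc a h) f))) (cubeIcc a h) := by
  refine ⟨(measurable_exp.comp_aemeasurable
    ((hf.aestronglyMeasurable.aemeasurable.sub_const _).const_mul μ)).aestronglyMeasurable.restrict,
    ?_⟩
  rw [hasFiniteIntegral_iff_ofReal (ae_of_all _ fun _ => (exp_pos _).le),
    ← setLIntegral_congr (cubeIco_ae_eq_cubeIcc a h)]
  exact (lintegral_exp_mul_sub_cubeAvg_le hf hB hbmo hμ hh).trans_lt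
    (ENNReal.mul_lt_top (jnConstant_ne_top n).lt_top
      ((volume_cubeIco a h).trans_lt (volume_cubeIcc_ne_top a h).lt_top))

lemma integrableOn_exp_mul (hf : LocallyIntegrable f volume) (hB : 0 < B)
    (hbmo : BmoLe f B) (hμ : |μ| ≤ jnExponent n / B) (hh : 0 < h) :
    IntegrableOn (fun x => exp (μ * f x)) (cubeIcc a h) := by
  rw [exp_mul_eq_mul_exp_mul_sub μ (cubeAvg (cubeIcc a h) f)]
  exact (integrableOn_exp_mul_sub_cubeAvg hf hB hbmo hμ hh).const_mul _

lemma cubeAvg_exp_mul_le (hf : LocallyIntegrable f volume) (hB : 0 < B)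
    (hbmo : BmoLe f B) (hμ : |μ| ≤ jnExponent n / B) (hh : 0 < h) :
    cubeAvg (cubeIcc a h) (fun x => exp (μ * f x))
      ≤ exp (μ * cubeAvg (cubeIcc a h) f) * (jnConstant n).toReal := by
  rw [exp_mul_eq_mul_exp_mul_sub μ (cubeAvg (cubeIcc a h) f), cubeAvg_const_mul]
  refine mul_le_mul_of_nonneg_left ?_ (exp_pos _).le
  rw [cubeAvg_le_iff_lintegral_le hh (integrableOn_exp_mul_sub_cubeAvg hf hB hbmo hμ hh)
    (fun _ => (exp_pos _).le) ENNReal.toReal_nonneg, ENNReal.ofReal_toReal (jnConstant_ne_top n)]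
  exact lintegral_exp_mul_sub_cubeAvg_le hf hB hbmo hμ hh

end ExpIntegrability

lemma bmoLe_bmoNorm (hf : ∃ C, BmoLe f C) : BmoLe f (bmoNorm f) := by
  obtain ⟨C, hC⟩ := hf
  exact fun Q hQ => le_csSup ⟨C, by rintro _ ⟨Q', hQ', rfl⟩; exact hC Q' hQ'⟩ ⟨Q, hQ, rfl⟩

lemma exp_mul_rpow_one_sub_conjExponent {p : ℝ} (hp : 1 < p) (lam y : ℝ) :
    exp (lam * y) ^ (1 - p / (p - 1)) = exp (-(lam / (p - 1)) * y) := by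
  rw [← exp_mul]
  congr 1
  field_simp [(sub_pos.2 hp).ne']
  ring

lemma apQ_exp_mul_le {p : ℝ} (hp : 1 < p) {B lam : ℝ}
    (hf : LocallyIntegrable f volume) (hB : 0 < B) (hbmo : BmoLe f B)
    (hlam : |lam| ≤ jnExponent n / B) (hlam' : |-(lam / (p - 1))| ≤ jnExponent n / B)
    {Q : Set (Fin n → ℝ)} (hQ : IsCube Q) :
    apQ p Q (fun x => exp (lam * f x)) ≤ (jnConstant n).toReal ^ p := by
  obtain ⟨a, h, hh, rfl⟩ := hQ
  have hp1 : 0 < p - 1 := sub_pos.2 hp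
  set c := cubeAvg (cubeIcc a h) f
  have hw := cubeAvg_exp_mul_le (a := a) hf hB hbmo hlam hh
  have hv := cubeAvg_exp_mul_le (a := a) hf hB hbmo hlam' hh
  rw [apQ, show (Set.univ.pi fun i => Set.Icc (a i) (a i + h)) = cubeIcc a h from rfl]
  simp_rw [exp_mul_rpow_one_sub_conjExponent hp]
  calc cubeAvg (cubeIcc a h) (fun x => exp (lam * f x)) *
        cubeAvg (cubeIcc a h) (fun x => exp (-(lam / (p - 1)) * f x)) ^ (p - 1)
      ≤ (exp (lam * c) * (jnConstant n).toReal) *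
          (exp (-(lam / (p - 1)) * c) * (jnConstant n).toReal) ^ (p - 1) := by
        have hv0 := cubeAvg_nonneg (cubeIcc a h) fun x => (exp_pos (-(lam / (p - 1)) * f x)).le
        gcongr
    _ = (jnConstant n).toReal ^ p := by
        rw [mul_rpow (exp_pos _).le ENNReal.toReal_nonneg, ← exp_mul, mul_mul_mul_comm,
          ← exp_add, ← rpow_one_add' ENNReal.toReal_nonneg (by linarith)]
        field_simp
        simp

lemma isApWeight_exp_mul {p : ℝ} (hp : 1 < p) {B lam : ℝ}
    (hf : LocallyIntegrable f volume) (hB : 0 < B) (hbmo : BmoLe f B)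
    (hlam : |lam| ≤ jnExponent n / B) (hlam' : |-(lam / (p - 1))| ≤ jnExponent n / B) :
    IsApWeight p (fun x => exp (lam * f x)) := by
  refine ⟨⟨locallyIntegrable_of_integrableOn_cubeIcc fun a h hh =>
      integrableOn_exp_mul hf hB hbmo hlam hh, ae_of_all _ fun _ => exp_pos _⟩, ?_,
    _, fun Q hQ => apQ_exp_mul_le hp hf hB hbmo hlam hlam' hQ⟩
  simp_rw [exp_mul_rpow_one_sub_conjExponent hp]
  exact locallyIntegrable_of_integrableOn_cubeIcc fun a h hh =>
    integrableOn_exp_mul hf hB hbmo hlam' hh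

end JohnNirenberg

open JohnNirenberg in
theorem exp_lambda_bmo_Ap_general {n : ℕ} (p : ℝ) (hp : 1 < p) :
    ∃ c : ℝ, 0 < c ∧
      ∀ f : (Fin n → ℝ) → ℝ, LocallyIntegrable f volume →
        (∃ C : ℝ, BmoLe f C) → 0 < bmoNorm f →
        ∀ lam : ℝ, 0 < lam → lam ≤ c / bmoNorm f →
          IsApWeight p (fun x => Real.exp (lam * f x)) := by
  have hp1 : 0 < p - 1 := sub_pos.2 hp
  have hc := jnExponent_pos n
  refine ⟨jnExponent n * min 1 (p - 1), by positivity, fun f hf hbdd hB lam hlam hle => ?_⟩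
  rw [le_div_iff₀ hB] at hle
  refine isApWeight_exp_mul hp hf hB (bmoLe_bmoNorm hbdd) ?_ ?_
  · rw [abs_of_pos hlam, le_div_iff₀ hB]
    nlinarith [min_le_left 1 (p - 1)]
  · rw [abs_neg, abs_of_pos (div_pos hlam hp1), div_le_div_iff₀ hp1 hB]
    nlinarith [min_le_right 1 (p - 1)]

/-- **John–Nirenberg.** For every `n ≥ 1` and `1 < p < ∞` there is a
constant `c > 0` depending only on `n` and `p` such that: if `f` is locally integrable
with `0 < ‖f‖_* < ∞`, then `e^{λf}` is an `A_p` weight for all `0 < λ ≤ c/‖f‖_*`. -/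
theorem exp_lambda_bmo_Ap {n : ℕ} (hn : 1 ≤ n) (p : ℝ) (hp : 1 < p) :
    ∃ c : ℝ, 0 < c ∧
      ∀ f : (Fin n → ℝ) → ℝ, LocallyIntegrable f volume →
        (∃ C : ℝ, BmoLe f C) → 0 < bmoNorm f →
        ∀ lam : ℝ, 0 < lam → lam ≤ c / bmoNorm f →
          IsApWeight p (fun x => Real.exp (lam * f x)) :=
  exp_lambda_bmo_Ap_general p hp
end
end
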